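/- arXiv:1404.4172 — 8 statements merged into one kernel-verified Lean document; each statement's English description precedes it below -/
import Mathlib

section
/- Let H and K be Hilbert spaces, A : H → K a bounded linear operator, and B a bounded operator on H. Then 0 ≤ B ≤ A*A if and only if there exists a bounded operator C on K with 0 ≤ C ≤ I such that B = A* C A. -/
/-!
Write `B = T* T` using `0 ≤ B`. Then `B ≤ A* A` says exactly `‖T x‖ ≤ ‖A x‖`, so `A x ↦ T x` is a
well-defined contraction on the range of `A` (Douglas' factorization): it extends by continuity to
the closure of the range and by zero on its orthogonal complement, giving `T = D A` with
`‖D‖ ≤ 1`. Then `C = D* D` works. Conversely `A* C A` and `A* A - A* C A = A* (1 - C) A` are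
positive as congruences of positive operators.
-/

open ContinuousLinearMap

section Factorization

variable {𝕜 E F G : Type*} [RCLike 𝕜] [AddCommGroup E] [Module 𝕜 E] [NormedAddCommGroup F] [InnerProductSpace 𝕜 F]
  [CompleteSpace F] [NormedAddCommGroup G] [NormedSpace 𝕜 G] [CompleteSpace G]

theorem LinearMap.exists_opNorm_le_comp_eq_of_norm_apply_le (f : E →ₗ[𝕜] F) (g : E →ₗ[𝕜] G)
    {c : ℝ} (hc : 0 ≤ c) (h : ∀ x, ‖g x‖ ≤ c * ‖f x‖) :
    ∃ d : F →L[𝕜] G, ‖d‖ ≤ c ∧ ∀ x, d (f x) = g x := by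
  set M := (LinearMap.range f).topologicalClosure
  let f' : E →ₗ[𝕜] M :=
    f.codRestrict M fun x ↦ (LinearMap.range f).le_topologicalClosure (f.mem_range_self x)
  have hdense : DenseRange f' := by
    rw [DenseRange, Subtype.dense_iff, ← Set.range_comp]
    exact (Submodule.topologicalClosure_coe _).trans_subset (by rw [LinearMap.coe_range]; rfl)
  refine ⟨g.extendOfNorm f' ∘L M.orthogonalProjectionOnto, ?_, fun x ↦ ?_⟩
  · calc _ ≤ ‖g.extendOfNorm f'‖ * ‖M.orthogonalProjectionOnto‖ := opNorm_comp_le _ _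
      _ ≤ c * 1 := by
        gcongr
        · exact LinearMap.opNorm_extendOfNorm_le hdense hc h
        · exact M.orthogonalProjectionOnto_norm_le
      _ = c := mul_one c
  · have hproj : M.orthogonalProjectionOnto (f x) = f' x :=
      M.orthogonalProjectionOnto_mem_subspace_eq_self (f' x)
    rw [ContinuousLinearMap.comp_apply, hproj]
    exact LinearMap.extendOfNorm_eq hdense ⟨c, h⟩ x

end Factorization

namespace ContinuousLinearMap

variable {𝕜 E F G : Type*} [RCLike 𝕜] [NormedAddCommGroup E] [InnerProductSpace 𝕜 E] [CompleteSpace E]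
  [NormedAddCommGroup F] [InnerProductSpace 𝕜 F] [CompleteSpace F]
  [NormedAddCommGroup G] [InnerProductSpace 𝕜 G] [CompleteSpace G]

theorem norm_apply_le_of_adjoint_comp_self_le {T : E →L[𝕜] F} {A : E →L[𝕜] G}
    (h : adjoint T ∘L T ≤ adjoint A ∘L A) (x : E) : ‖T x‖ ≤ ‖A x‖ := by
  have hsq := h.re_inner_nonneg_left x
  rw [sub_apply, inner_sub_left, map_sub, sub_nonneg, ← apply_norm_sq_eq_inner_adjoint_left,
    ← apply_norm_sq_eq_inner_adjoint_left] at hsq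
  exact (pow_le_pow_iff_left₀ (norm_nonneg _) (norm_nonneg _) two_ne_zero).mp hsq

theorem adjoint_comp_self_le_one_of_norm_le_one {D : E →L[𝕜] F} (hD : ‖D‖ ≤ 1) :
    adjoint D ∘L D ≤ 1 := by
  refine ⟨((IsSelfAdjoint.one _).sub (isPositive_adjoint_comp_self D).isSelfAdjoint).isSymmetric,
    fun x ↦ ?_⟩
  rw [reApplyInnerSelf_apply, sub_apply, one_apply_eq_self, inner_sub_left, map_sub, sub_nonneg,
    ← apply_norm_sq_eq_inner_adjoint_left, inner_self_eq_norm_sq]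
  gcongr
  simpa using D.le_of_opNorm_le hD x

end ContinuousLinearMap

/-- Let `H` and `K` be (complex) Hilbert spaces, `A : H → K` a bounded linear
operator and `B` a bounded operator on `H`.  Then `0 ≤ B ≤ A*A` (in the Loewner order, i.e.
`B` and `A*A - B` are positive) if and only if there exists a bounded operator `C` on `K`
with `0 ≤ C ≤ I` such that `B = A* C A`. -/
theorem operator_lemma_existence
    {H K : Type*} [NormedAddCommGroup H] [InnerProductSpace ℂ H] [CompleteSpace H]
    [NormedAddCommGroup K] [InnerProductSpace ℂ K] [CompleteSpace K]
    (A : H →L[ℂ] K) (B : H →L[ℂ] H) :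
    (B.IsPositive ∧ ((ContinuousLinearMap.adjoint A) ∘L A - B).IsPositive) ↔
      ∃ C : K →L[ℂ] K, C.IsPositive ∧ ((1 : K →L[ℂ] K) - C).IsPositive ∧
        B = (ContinuousLinearMap.adjoint A) ∘L C ∘L A := by
  constructor
  · rintro ⟨hB, hAB⟩
    obtain ⟨T, rfl⟩ :=
      CStarAlgebra.nonneg_iff_eq_star_mul_self.mp ((nonneg_iff_isPositive B).mpr hB)
    rw [star_eq_adjoint, mul_def] at hAB ⊢
    obtain ⟨D, hD, hDA⟩ := (A : H →ₗ[ℂ] K).exists_opNorm_le_comp_eq_of_norm_apply_le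
      (T : H →ₗ[ℂ] H) zero_le_one fun x ↦ by
        simpa using norm_apply_le_of_adjoint_comp_self_le hAB x
    obtain rfl : D ∘L A = T := ext hDA
    exact ⟨adjoint D ∘L D, isPositive_adjoint_comp_self D,
      adjoint_comp_self_le_one_of_norm_le_one hD, by rw [adjoint_comp]; rfl⟩
  · rintro ⟨C, hC, hC1, rfl⟩
    exact ⟨hC.adjoint_conj A, by simpa [sub_comp, comp_sub, one_def] using hC1.adjoint_conj A⟩
end

section
/- Let H and K be Hilbert spaces and A : H → K a bounded linear operator. The operator C satisfying 0 ≤ C ≤ I and B = A* C A (for a given B with 0 ≤ B ≤ A*A) is unique for every such B if and only if the range of A is dense in K. -/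
/-!
Write `B = R†R`. Then `0 ≤ A†A - B` says `‖R x‖ ≤ ‖A x‖`, so `R = T A` for a contraction `T`
(defined on `ran A`, extended to its closure by continuity and by `0` on `(ran A)ᗮ`), and
`C = T†T` satisfies `0 ≤ C ≤ 1` and `A† C A = R†R = B`. If `ran A` is dense then `A†` is injective,
so `A† C A` determines `C` on the dense set `ran A`, hence everywhere. Conversely, both `C = 1` and
the orthogonal projection onto the closure of `ran A` solve `A† C A = A†A`, so uniqueness forces
that closure to be the whole space.
-/

open ContinuousLinearMap

theorem Submodule.starProjection_comp_eq_self_of_range_le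
    {𝕜 E F : Type*} [RCLike 𝕜] [NormedAddCommGroup E] [NormedSpace 𝕜 E]
    [NormedAddCommGroup F] [InnerProductSpace 𝕜 F]
    {A : E →L[𝕜] F} {U : Submodule 𝕜 F} [U.HasOrthogonalProjection]
    (h : LinearMap.range (A : E →ₗ[𝕜] F) ≤ U) : U.starProjection ∘L A = A := by
  ext x
  exact U.starProjection_eq_self_iff.mpr (h (LinearMap.mem_range_self _ x))

namespace ContinuousLinearMap

theorem denseRange_codRestrict_topologicalClosure
    {R M N : Type*} [Semiring R] [TopologicalSpace M] [AddCommMonoid M] [Module R M]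
    [TopologicalSpace N] [AddCommMonoid N] [Module R N] [ContinuousAdd N] [ContinuousConstSMul R N]
    (A : M →L[R] N) :
    DenseRange (A.codRestrict (LinearMap.range (A : M →ₗ[R] N)).topologicalClosure
      fun x => Submodule.le_topologicalClosure _ (LinearMap.mem_range_self _ x)) := by
  refine Subtype.dense_iff.mpr ?_
  rw [← Set.range_comp]
  exact (Submodule.topologicalClosure_coe _).subset

theorem exists_norm_le_one_comp_eq_of_norm_apply_le
    {𝕜 E F G : Type*} [RCLike 𝕜] [NormedAddCommGroup E] [NormedSpace 𝕜 E]
    [NormedAddCommGroup F] [InnerProductSpace 𝕜 F] [CompleteSpace F]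
    [NormedAddCommGroup G] [NormedSpace 𝕜 G] [CompleteSpace G]
    {R : E →L[𝕜] G} {A : E →L[𝕜] F} (h : ∀ x, ‖R x‖ ≤ ‖A x‖) :
    ∃ T : F →L[𝕜] G, ‖T‖ ≤ 1 ∧ T ∘L A = R := by
  set U := (LinearMap.range (A : E →ₗ[𝕜] F)).topologicalClosure
  set A' : E →L[𝕜] U :=
    A.codRestrict U fun x => Submodule.le_topologicalClosure _ (LinearMap.mem_range_self _ x)
  have hA' : DenseRange (A' : E →ₗ[𝕜] U) := A.denseRange_codRestrict_topologicalClosure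
  have hbound : ∀ x, ‖(R : E →ₗ[𝕜] G) x‖ ≤ 1 * ‖(A' : E →ₗ[𝕜] U) x‖ := fun x =>
    (h x).trans_eq (one_mul _).symm
  refine ⟨(R : E →ₗ[𝕜] G).extendOfNorm (A' : E →ₗ[𝕜] U) ∘L U.orthogonalProjectionOnto, ?_, ?_⟩
  · calc _ ≤ _ := opNorm_comp_le _ _
      _ ≤ 1 := mul_le_one₀ (LinearMap.opNorm_extendOfNorm_le hA' zero_le_one hbound)
          (norm_nonneg _) U.orthogonalProjectionOnto_norm_le
  · ext x
    have hAx : U.orthogonalProjectionOnto (A x) = A' x :=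
      U.orthogonalProjectionOnto_mem_subspace_eq_self (A' x)
    simpa [hAx] using LinearMap.extendOfNorm_eq hA' ⟨1, hbound⟩ x

section Hilbert

variable {𝕜 E F G : Type*} [RCLike 𝕜]
  [NormedAddCommGroup E] [InnerProductSpace 𝕜 E] [CompleteSpace E]
  [NormedAddCommGroup F] [InnerProductSpace 𝕜 F] [CompleteSpace F]
  [NormedAddCommGroup G] [InnerProductSpace 𝕜 G] [CompleteSpace G]

theorem norm_apply_le_of_isPositive_adjoint_comp_self_sub {R : E →L[𝕜] F} {S : E →L[𝕜] G}
    (h : (adjoint S ∘L S - adjoint R ∘L R).IsPositive) (x : E) : ‖R x‖ ≤ ‖S x‖ := by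
  have hx := h.re_inner_nonneg_left x
  rw [sub_apply, inner_sub_left, map_sub, ← apply_norm_sq_eq_inner_adjoint_left,
    ← apply_norm_sq_eq_inner_adjoint_left, sub_nonneg] at hx
  exact (sq_le_sq₀ (norm_nonneg _) (norm_nonneg _)).mp hx

theorem isPositive_one_sub_adjoint_comp_self {T : E →L[𝕜] F} (hT : ‖T‖ ≤ 1) :
    (1 - adjoint T ∘L T).IsPositive := by
  refine isPositive_def'.mpr
    ⟨(IsSelfAdjoint.one _).sub (isPositive_adjoint_comp_self T).isSelfAdjoint, fun x => ?_⟩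
  rw [reApplyInnerSelf, sub_apply, inner_sub_left, map_sub, one_apply_eq_self,
    ← apply_norm_sq_eq_inner_adjoint_left, inner_self_eq_norm_sq, sub_nonneg]
  gcongr
  simpa using T.le_of_opNorm_le hT x

theorem eq_of_adjoint_comp_comp_eq {A : E →L[𝕜] F} (hA : DenseRange A) {C D : F →L[𝕜] F}
    (h : adjoint A ∘L C ∘L A = adjoint A ∘L D ∘L A) : C = D := by
  have hker : (adjoint A : F →ₗ[𝕜] E).ker = ⊥ := by
    rw [← orthogonal_range, ← Submodule.topologicalClosure_eq_top_iff,
      ← Submodule.dense_iff_topologicalClosure_eq_top, LinearMap.coe_range]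
    exact hA
  have hCD : C ∘L A = D ∘L A := by
    ext x
    exact LinearMap.ker_eq_bot.mp hker congr($h x)
  exact DFunLike.coe_injective (hA.equalizer C.continuous D.continuous congr(⇑$hCD))

end Hilbert

theorem exists_isPositive_adjoint_comp_comp_eq
    {H K : Type*} [NormedAddCommGroup H] [InnerProductSpace ℂ H] [CompleteSpace H]
    [NormedAddCommGroup K] [InnerProductSpace ℂ K] [CompleteSpace K]
    {A : H →L[ℂ] K} {B : H →L[ℂ] H} (hB : B.IsPositive) (hAB : (adjoint A ∘L A - B).IsPositive) :
    ∃ C : K →L[ℂ] K, C.IsPositive ∧ (1 - C).IsPositive ∧ B = adjoint A ∘L C ∘L A := by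
  obtain ⟨R, rfl⟩ := CStarAlgebra.nonneg_iff_eq_star_mul_self.mp ((nonneg_iff_isPositive B).mpr hB)
  rw [star_eq_adjoint, mul_def] at hAB ⊢
  obtain ⟨T, hT, rfl⟩ := exists_norm_le_one_comp_eq_of_norm_apply_le
    (norm_apply_le_of_isPositive_adjoint_comp_self_sub hAB)
  refine ⟨adjoint T ∘L T, isPositive_adjoint_comp_self T, isPositive_one_sub_adjoint_comp_self hT, ?_⟩
  rw [adjoint_comp]
  rfl

end ContinuousLinearMap

/-- Let `H`, `K` be complex Hilbert spaces and `A : H → K` bounded linear.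
The operator `C` with `0 ≤ C ≤ I` and `B = A* C A` (for a given `B` with `0 ≤ B ≤ A*A`) is
unique for every such `B` if and only if the range of `A` is dense in `K`. -/
theorem operator_lemma_uniqueness
    {H K : Type*} [NormedAddCommGroup H] [InnerProductSpace ℂ H] [CompleteSpace H]
    [NormedAddCommGroup K] [InnerProductSpace ℂ K] [CompleteSpace K]
    (A : H →L[ℂ] K) :
    (∀ B : H →L[ℂ] H, B.IsPositive → ((ContinuousLinearMap.adjoint A) ∘L A - B).IsPositive →
      ∃! C : K →L[ℂ] K, C.IsPositive ∧ ((1 : K →L[ℂ] K) - C).IsPositive ∧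
        B = (ContinuousLinearMap.adjoint A) ∘L C ∘L A) ↔
      DenseRange A := by
  constructor
  · intro huniq
    set U := (LinearMap.range (A : H →ₗ[ℂ] K)).topologicalClosure
    obtain ⟨C, -, hC⟩ := huniq (adjoint A ∘L A) (isPositive_adjoint_comp_self A) (by simp)
    have hP : U.starProjection = 1 := by
      refine (hC _ ⟨.of_isStarProjection isStarProjection_starProjection, ?_, ?_⟩).trans
        (hC 1 ⟨isPositive_one, by simp, by rw [one_def, id_comp]⟩).symm
      · exact U.starProjection_orthogonal' ▸ .of_isStarProjection isStarProjection_starProjection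
      · rw [Submodule.starProjection_comp_eq_self_of_range_le (Submodule.le_topologicalClosure _)]
    rw [← Submodule.starProjection_top', Submodule.starProjection_inj] at hP
    show Dense (LinearMap.range (A : H →ₗ[ℂ] K) : Set K)
    exact Submodule.dense_iff_topologicalClosure_eq_top.mpr hP
  · intro hA B hB hAB
    obtain ⟨C, hC⟩ := exists_isPositive_adjoint_comp_comp_eq hB hAB
    exact ⟨C, hC, fun D hD => eq_of_adjoint_comp_comp_eq hA (hD.2.2.symm.trans hC.2.2)⟩
end

section
/- In C², with φ₁ = (1,0), φ₂ = (0,1), ψ = (1/√2)(φ₁ − φ₂), E₁ = (4/7)|φ₁⟩⟨φ₁|, E₂ = (4/7)|φ₂⟩⟨φ₂|, E₃ = I − E₁ − E₂, F₁ = (4/7)|ψ⟩⟨ψ|, the three operator inequalities E₁ + F₁ ≤ I, E₂ + F₁ ≤ I, and E₃ + F₁ ≤ I all hold. -/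
open Matrix
open scoped ComplexOrder

/-! Each of the three operators `1 - (E + F₁)` is `7⁻¹ • AᴴA` for an explicit integer matrix `A`:
`1 - (E₁ + F₁) = 7⁻¹ • !![1, 2; 2, 5]`, `1 - (E₂ + F₁) = 7⁻¹ • !![5, 2; 2, 1]`, and, since
`E₃ = (3/7) • 1`, `1 - (E₃ + F₁) = 7⁻¹ • !![2, 2; 2, 2]`. -/

lemma vecMulVec_ofReal_smul_self_star {n : Type*} (r : ℝ) (v : n → ℂ) :
    vecMulVec ((r : ℂ) • v) (star ((r : ℂ) • v)) = ((r ^ 2 : ℝ) : ℂ) • vecMulVec v (star v) := by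
  rw [star_smul, Complex.star_def, Complex.conj_ofReal, smul_vecMulVec, vecMulVec_smul, smul_smul]
  push_cast
  ring_nf

lemma vecMulVec_fin_two {α : Type*} [Mul α] (v w : Fin 2 → α) :
    vecMulVec v w = !![v 0 * w 0, v 0 * w 1; v 1 * w 0, v 1 * w 1] := by
  ext i j
  fin_cases i <;> fin_cases j <;> rfl

/-- In `ℂ²`, with `φ₁ = (1,0)`, `φ₂ = (0,1)`, `ψ = (1/√2)(φ₁ - φ₂)`,
`E₁ = (4/7)|φ₁⟩⟨φ₁|`, `E₂ = (4/7)|φ₂⟩⟨φ₂|`, `E₃ = I - E₁ - E₂`, `F₁ = (4/7)|ψ⟩⟨ψ|`,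
the three operator inequalities `E₁ + F₁ ≤ I`, `E₂ + F₁ ≤ I`, `E₃ + F₁ ≤ I` all hold,
where `T ≤ I` means `1 - T` is positive semidefinite (Loewner order). -/
theorem binarization_inequalities :
    let φ₁ : Fin 2 → ℂ := ![1, 0]
    let φ₂ : Fin 2 → ℂ := ![0, 1]
    let ψ : Fin 2 → ℂ := ((1 / Real.sqrt 2 : ℝ) : ℂ) • (φ₁ - φ₂)
    let E₁ : Matrix (Fin 2) (Fin 2) ℂ := (4 / 7 : ℂ) • vecMulVec φ₁ (star φ₁)
    let E₂ : Matrix (Fin 2) (Fin 2) ℂ := (4 / 7 : ℂ) • vecMulVec φ₂ (star φ₂)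
    let E₃ : Matrix (Fin 2) (Fin 2) ℂ := 1 - E₁ - E₂
    let F₁ : Matrix (Fin 2) (Fin 2) ℂ := (4 / 7 : ℂ) • vecMulVec ψ (star ψ)
    ((1 : Matrix (Fin 2) (Fin 2) ℂ) - (E₁ + F₁)).PosSemidef ∧
      ((1 : Matrix (Fin 2) (Fin 2) ℂ) - (E₂ + F₁)).PosSemidef ∧
      ((1 : Matrix (Fin 2) (Fin 2) ℂ) - (E₃ + F₁)).PosSemidef := by
  intro φ₁ φ₂ ψ E₁ E₂ E₃ F₁
  have hE₁ : E₁ = !![4 / 7, 0; 0, 0] := by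
    simp only [E₁, φ₁, vecMulVec_fin_two]
    ext i j; fin_cases i <;> fin_cases j <;> simp
  have hE₂ : E₂ = !![0, 0; 0, 4 / 7] := by
    simp only [E₂, φ₂, vecMulVec_fin_two]
    ext i j; fin_cases i <;> fin_cases j <;> simp
  have hF₁ : F₁ = !![2 / 7, -2 / 7; -2 / 7, 2 / 7] := by
    have hsq : ((1 / Real.sqrt 2) ^ 2 : ℝ) = 1 / 2 := by
      rw [div_pow, Real.sq_sqrt zero_le_two, one_pow]
    simp only [F₁, ψ, vecMulVec_ofReal_smul_self_star, hsq, φ₁, φ₂, vecMulVec_fin_two]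
    ext i j; fin_cases i <;> fin_cases j <;> simp <;> norm_num
  have gram {M : Matrix (Fin 2) (Fin 2) ℂ} (A : Matrix (Fin 2) (Fin 2) ℂ)
      (hM : M = (7⁻¹ : ℝ) • (Aᴴ * A)) : M.PosSemidef :=
    hM ▸ (posSemidef_conjTranspose_mul_self A).smul (by norm_num)
  refine ⟨gram !![1, 2; 0, 1] ?_, gram !![2, 1; 1, 0] ?_, gram !![1, 1; 1, 1] ?_⟩ <;>
  · simp only [E₃, hE₁, hE₂, hF₁]
    ext i j; fin_cases i <;> fin_cases j <;> simp [mul_apply, one_apply, map_ofNat] <;> norm_num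
end

section
/- Two binary observables (effects E and F on a Hilbert space H) are jointly measurable if and only if they are coexistent; explicitly, if there is a POVM M and sets Z₁, Z₂ with M(Z₁)=E and M(Z₂)=F, then the map N({(x₁,x₂)}) := M(Z₁^{x₁} ∩ Z₂^{x₂}), where Z^+ = Z and Z^- is the complement, defines a joint observable for (E, I−E) and (F, I−F). -/
open scoped InnerProductSpace

/-- A positive-operator-valued measure (normalized, defined on all sets, vanishing on
non-measurable sets). -/
structure POVM (Ω : Type*) [MeasurableSpace Ω]
    (H : Type*) [NormedAddCommGroup H] [InnerProductSpace ℂ H] [CompleteSpace H] where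
  toFun : Set Ω → (H →L[ℂ] H)
  isPositive' : ∀ s, (toFun s).IsPositive
  empty' : toFun ∅ = 0
  total' : toFun Set.univ = 1
  not_measurable' : ∀ s, ¬ MeasurableSet s → toFun s = 0
  m_iUnion' : ∀ f : ℕ → Set Ω, (∀ n, MeasurableSet (f n)) → Pairwise (Function.onFun Disjoint f) →
    ∀ x : H, HasSum (fun n => toFun (f n) x) (toFun (⋃ n, f n) x)

variable {Ω Ω' Ωb : Type*} [MeasurableSpace Ω] [MeasurableSpace Ω'] [MeasurableSpace Ωb]
variable {H : Type*} [NormedAddCommGroup H] [InnerProductSpace ℂ H] [CompleteSpace H]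

/-- Sharp observable: a projection-valued measure. -/
def POVM.IsSharp (P : POVM Ω H) : Prop := ∀ s, IsIdempotentElem (P.toFun s)

/-- A POVM is discrete if it is concentrated on a countable set of points. -/
def POVM.Discrete (A : POVM Ω H) : Prop :=
  ∃ D : Set Ω, D.Countable ∧ ∀ s, MeasurableSet s → s ∩ D = ∅ → A.toFun s = 0

/-- Extremality in the convex set of POVMs on `(Ω, Σ)`. -/
def POVM.Extreme (A : POVM Ω H) : Prop :=
  ∀ (A₁ A₂ : POVM Ω H) (t : ℝ), 0 < t → t < 1 →
    (∀ s, A.toFun s = (t : ℂ) • A₁.toFun s + ((1 - t : ℝ) : ℂ) • A₂.toFun s) →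
    A₁.toFun = A.toFun ∧ A₂.toFun = A.toFun

/-- Joint measurability: a POVM on the product σ-algebra having `A` and `B` as marginals. -/
def JointlyMeasurable (A : POVM Ω H) (B : POVM Ω' H) : Prop :=
  ∃ N : POVM (Ω × Ω') H,
    (∀ X, MeasurableSet X → N.toFun (X ×ˢ Set.univ) = A.toFun X) ∧
    (∀ Y, MeasurableSet Y → N.toFun (Set.univ ×ˢ Y) = B.toFun Y)

/-- `ran A ⊆ ran M`. -/
def RanSubset (A : POVM Ω H) (M : POVM Ωb H) : Prop :=
  ∀ X, MeasurableSet X → ∃ Z, MeasurableSet Z ∧ M.toFun Z = A.toFun X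

/-- Coexistence: a common mother observable on some measurable space contains both ranges. -/
def Coexistent (A : POVM Ω H) (B : POVM Ω' H) : Prop :=
  ∃ (Ωm : Type) (_ : MeasurableSpace Ωm) (M : POVM Ωm H), RanSubset A M ∧ RanSubset B M

/-- Joint measurability of two binary observables `(E, 1-E)` and `(F, 1-F)`. -/
def BinJointlyMeasurable {H : Type*} [NormedAddCommGroup H] [InnerProductSpace ℂ H]
    [CompleteSpace H] (E F : H →L[ℂ] H) : Prop :=
  ∃ G : Bool → Bool → (H →L[ℂ] H),
    (∀ x y, (G x y).IsPositive) ∧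
    (G true true + G true false + G false true + G false false = 1) ∧
    (G true true + G true false = E) ∧
    (G true true + G false true = F)

/-- Coexistence of two binary observables `(E, 1-E)` and `(F, 1-F)`. -/
def BinCoexistent {H : Type*} [NormedAddCommGroup H] [InnerProductSpace ℂ H]
    [CompleteSpace H] (E F : H →L[ℂ] H) : Prop :=
  ∃ (Ωm : Type) (_ : MeasurableSpace Ωm) (M : POVM Ωm H) (Z₁ Z₂ : Set Ωm),
    MeasurableSet Z₁ ∧ MeasurableSet Z₂ ∧ M.toFun Z₁ = E ∧ M.toFun Z₂ = F

/-! Coexistence gives joint measurability by passing to the common refinement of the two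
partitions `{Z₁, Z₁ᶜ}` and `{Z₂, Z₂ᶜ}` of the mother observable's outcome space: finite
additivity of `M` makes the four cells sum to `1` and have marginals `E` and `F`. Conversely, a
joint observable `G` is itself a mother observable on the four-point space `Bool × Bool`, where
`E` and `F` are the values on the sets on which the first, resp. second, outcome is `true`. -/

lemma hasSum_indicator_iUnion {ι α β : Type*} [AddCommMonoid β] [TopologicalSpace β]
    {f : ι → Set α} (hf : Pairwise (Function.onFun Disjoint f)) (g : α → β) (a : α) :
    HasSum (fun n => (f n).indicator g a) ((⋃ n, f n).indicator g a) := by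
  by_cases ha : a ∈ ⋃ n, f n
  · obtain ⟨m, ham⟩ := Set.mem_iUnion.mp ha
    rw [Set.indicator_of_mem ha]
    convert hasSum_single (f := fun n => (f n).indicator g a) m fun n hnm =>
      Set.indicator_of_notMem (fun han => (hf hnm).ne_of_mem han ham rfl) g
    exact (Set.indicator_of_mem ham g).symm
  · rw [Set.indicator_of_notMem ha]
    convert hasSum_zero with n
    exact Set.indicator_of_notMem (fun han => ha (Set.mem_iUnion_of_mem n han)) g

namespace POVM

variable (M : POVM Ωb H) {s t : Set Ωb}

lemma apply_union (hs : MeasurableSet s) (ht : MeasurableSet t) (hst : Disjoint s t) :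
    M.toFun (s ∪ t) = M.toFun s + M.toFun t := by
  let f : ℕ → Set Ωb
    | 0 => s
    | 1 => t
    | _ + 2 => ∅
  have hf : ∀ n, MeasurableSet (f n) := by
    rintro (_ | _ | n) <;> simp [f, hs, ht]
  have hdisj : Pairwise (Function.onFun Disjoint f) := by
    rintro (_ | _ | m) (_ | _ | n) hmn <;> simp_all [f, Function.onFun, hst.symm]
  have hunion : ⋃ n, f n = s ∪ t := by
    rw [← Set.union_iUnion_nat_succ, ← Set.union_iUnion_nat_succ]
    simp [f]
  ext x
  have hsum := M.m_iUnion' f hf hdisj x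
  rw [hunion] at hsum
  have hfinite : HasSum (fun n => M.toFun (f n) x) (∑ n ∈ Finset.range 2, M.toFun (f n) x) :=
    hasSum_sum_of_ne_finset_zero fun n hn => by
      rcases n with _ | _ | n <;> simp_all [f, M.empty']
  simpa [Finset.sum_range_succ, f] using hsum.unique hfinite

lemma apply_inter_add_apply_inter_compl (hs : MeasurableSet s) (ht : MeasurableSet t) :
    M.toFun (s ∩ t) + M.toFun (s ∩ tᶜ) = M.toFun s := by
  rw [← M.apply_union (hs.inter ht) (hs.inter ht.compl)
    (disjoint_compl_right.mono inf_le_right inf_le_right), Set.inter_union_compl]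

lemma apply_add_apply_compl (hs : MeasurableSet s) : M.toFun s + M.toFun sᶜ = 1 := by
  rw [← M.apply_union hs hs.compl disjoint_compl_right, Set.union_compl_self, M.total']

lemma sum_apply_inter_compl_eq_one (hs : MeasurableSet s) (ht : MeasurableSet t) :
    M.toFun (s ∩ t) + M.toFun (s ∩ tᶜ) + M.toFun (sᶜ ∩ t) + M.toFun (sᶜ ∩ tᶜ) = 1 := by
  rw [add_assoc _ (M.toFun (sᶜ ∩ t)), M.apply_inter_add_apply_inter_compl hs ht,
    M.apply_inter_add_apply_inter_compl hs.compl ht, M.apply_add_apply_compl hs]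

lemma apply_inter_add_apply_compl_inter (hs : MeasurableSet s) (ht : MeasurableSet t) :
    M.toFun (s ∩ t) + M.toFun (sᶜ ∩ t) = M.toFun t := by
  rw [Set.inter_comm s, Set.inter_comm sᶜ, M.apply_inter_add_apply_inter_compl ht hs]

end POVM

noncomputable def POVM.ofFintype {α : Type*} [Fintype α] [MeasurableSpace α]
    [MeasurableSingletonClass α] (G : α → H →L[ℂ] H) (hG : ∀ a, (G a).IsPositive)
    (hsum : ∑ a, G a = 1) : POVM α H where
  toFun s := ∑ a, s.indicator G a
  isPositive' s := by
    refine Finset.sum_induction _ _ (fun _ _ => .add) ContinuousLinearMap.isPositive_zero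
      fun a _ => ?_
    by_cases ha : a ∈ s <;> simp [ha, hG a, ContinuousLinearMap.isPositive_zero]
  empty' := by simp
  total' := by simpa using hsum
  not_measurable' s hs := absurd s.toFinite.measurableSet hs
  m_iUnion' f _ hf x := by
    simpa using (hasSum_sum fun a _ => hasSum_indicator_iUnion hf G a).mapL
      (ContinuousLinearMap.apply ℂ H x)

theorem binary_JM_iff_coexistent_general {H : Type*} [NormedAddCommGroup H] [InnerProductSpace ℂ H]
    [CompleteSpace H] (E F : H →L[ℂ] H) :
    (BinJointlyMeasurable E F ↔ BinCoexistent E F) ∧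
    (∀ (Ωm : Type) (_ : MeasurableSpace Ωm) (M : POVM Ωm H) (Z₁ Z₂ : Set Ωm),
      MeasurableSet Z₁ → MeasurableSet Z₂ → M.toFun Z₁ = E → M.toFun Z₂ = F →
      ((∀ (W₁ W₂ : Set Ωm), (M.toFun (W₁ ∩ W₂)).IsPositive) ∧
        M.toFun (Z₁ ∩ Z₂) + M.toFun (Z₁ ∩ Z₂ᶜ) + M.toFun (Z₁ᶜ ∩ Z₂) + M.toFun (Z₁ᶜ ∩ Z₂ᶜ) = 1 ∧
        M.toFun (Z₁ ∩ Z₂) + M.toFun (Z₁ ∩ Z₂ᶜ) = E ∧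
        M.toFun (Z₁ ∩ Z₂) + M.toFun (Z₁ᶜ ∩ Z₂) = F)) := by
  refine ⟨⟨?_, ?_⟩, ?_⟩
  · rintro ⟨G, hG, hsum, rfl, rfl⟩
    refine ⟨Bool × Bool, inferInstance,
      POVM.ofFintype (fun p => G p.1 p.2) (fun p => hG p.1 p.2) ?_, {p | p.1}, {p | p.2},
      Set.toFinite _ |>.measurableSet, Set.toFinite _ |>.measurableSet, ?_, ?_⟩ <;>
    simp [POVM.ofFintype, Fintype.sum_prod_type, ← hsum, Set.indicator, add_assoc]
  · rintro ⟨Ωm, _, M, Z₁, Z₂, h₁, h₂, rfl, rfl⟩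
    exact ⟨fun b c => M.toFun ((bif b then Z₁ else Z₁ᶜ) ∩ (bif c then Z₂ else Z₂ᶜ)),
      fun _ _ => M.isPositive' _, M.sum_apply_inter_compl_eq_one h₁ h₂,
      M.apply_inter_add_apply_inter_compl h₁ h₂, M.apply_inter_add_apply_compl_inter h₁ h₂⟩
  · rintro Ωm _ M Z₁ Z₂ h₁ h₂ rfl rfl
    exact ⟨fun _ _ => M.isPositive' _, M.sum_apply_inter_compl_eq_one h₁ h₂,
      M.apply_inter_add_apply_inter_compl h₁ h₂, M.apply_inter_add_apply_compl_inter h₁ h₂⟩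

/-- Two binary observables (effects `E`, `F`) are jointly measurable iff they
are coexistent; explicitly, if `M(Z₁) = E` and `M(Z₂) = F` for a POVM `M`, then
`N(x₁,x₂) := M(Z₁^{x₁} ∩ Z₂^{x₂})` (with `Z⁺ = Z`, `Z⁻ = Zᶜ`) is a joint observable for
`(E, 1-E)` and `(F, 1-F)`. -/
theorem binary_JM_iff_coexistent {H : Type*} [NormedAddCommGroup H] [InnerProductSpace ℂ H]
    [CompleteSpace H] (E F : H →L[ℂ] H)
    (hE : E.IsPositive ∧ ((1 : H →L[ℂ] H) - E).IsPositive)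
    (hF : F.IsPositive ∧ ((1 : H →L[ℂ] H) - F).IsPositive) :
    (BinJointlyMeasurable E F ↔ BinCoexistent E F) ∧
    (∀ (Ωm : Type) (_ : MeasurableSpace Ωm) (M : POVM Ωm H) (Z₁ Z₂ : Set Ωm),
      MeasurableSet Z₁ → MeasurableSet Z₂ → M.toFun Z₁ = E → M.toFun Z₂ = F →
      ((∀ (W₁ W₂ : Set Ωm), (M.toFun (W₁ ∩ W₂)).IsPositive) ∧
        M.toFun (Z₁ ∩ Z₂) + M.toFun (Z₁ ∩ Z₂ᶜ) + M.toFun (Z₁ᶜ ∩ Z₂) + M.toFun (Z₁ᶜ ∩ Z₂ᶜ) = 1 ∧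
        M.toFun (Z₁ ∩ Z₂) + M.toFun (Z₁ ∩ Z₂ᶜ) = E ∧
        M.toFun (Z₁ ∩ Z₂) + M.toFun (Z₁ᶜ ∩ Z₂) = F)) :=
  binary_JM_iff_coexistent_general E F
end

section
/- Let E₁,…,Eₙ be effects on a Hilbert space H. If the binary observables O^{E_i} = (E_i, I−E_i) are coexistent, i.e., there exists a POVM M : Σ̄ → L(H) and sets Z₁,…,Zₙ ∈ Σ̄ with E_i = M(Z_i) for all i, then the n observables O^{E_1},…,O^{E_n} are jointly measurable: the map N({(x₁,…,xₙ)}) := M(Z₁^{x₁} ∩ ⋯ ∩ Zₙ^{xₙ}) (where Z^{+1}=Z, Z^{-1}=Ω̄∖Z) is a POVM on {−1,+1}ⁿ whose i-th marginal is O^{E_i}. -/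
open scoped InnerProductSpace

variable {Ω Ω' Ωb : Type*} [MeasurableSpace Ω] [MeasurableSpace Ω'] [MeasurableSpace Ωb]
variable {H : Type*} [NormedAddCommGroup H] [InnerProductSpace ℂ H] [CompleteSpace H]

/-! The cell `⋂ i, Z i ^ x i` is the fibre over `x` of the map `ω ↦ (ω ∈ Z i)ᵢ`, so the proposed
joint observable is the image of `M` under this map. Finite additivity of `M` over fibres gives
normalization (the fibres cover the whole space) and the `i`-th marginal (the fibres over
`{x | x i = true}` cover `Z i`). -/

open MeasureTheory

namespace POVM

def toVectorMeasure (M : POVM Ω H) (v : H) : VectorMeasure Ω H where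
  measureOf' s := M.toFun s v
  empty' := by simp [M.empty']
  not_measurable' s hs := by simp [M.not_measurable' s hs]
  m_iUnion' f hf hd := M.m_iUnion' f hf hd v

@[simp]
theorem toVectorMeasure_apply (M : POVM Ω H) (v : H) (s : Set Ω) :
    M.toVectorMeasure v s = M.toFun s v :=
  rfl

theorem toFun_biUnion_finset (M : POVM Ω H) {ι : Type*} {s : Finset ι} {f : ι → Set Ω}
    (hd : Set.PairwiseDisjoint ↑s f) (hm : ∀ i ∈ s, MeasurableSet (f i)) :
    M.toFun (⋃ i ∈ s, f i) = ∑ i ∈ s, M.toFun (f i) := by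
  ext v
  simpa using (M.toVectorMeasure v).of_biUnion_finset hd hm

theorem toFun_preimage_finset (M : POVM Ω H) {α : Type*} {g : Ω → α}
    (hg : ∀ a, MeasurableSet (g ⁻¹' {a})) (s : Finset α) :
    M.toFun (g ⁻¹' s) = ∑ a ∈ s, M.toFun (g ⁻¹' {a}) := by
  rw [← Set.biUnion_preimage_singleton]
  exact M.toFun_biUnion_finset (Set.pairwiseDisjoint_fiber g _) fun a _ => hg a

end POVM

section MembershipPattern

variable {α ι : Type*} (Z : ι → Set α)

open Classical in
noncomputable def membershipPattern (a : α) : ι → Bool := fun i => decide (a ∈ Z i)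

theorem membershipPattern_preimage_singleton (x : ι → Bool) :
    membershipPattern Z ⁻¹' {x} = ⋂ i, if x i then Z i else (Z i)ᶜ := by
  ext a
  simp only [Set.mem_preimage, Set.mem_singleton_iff, Set.mem_iInter, funext_iff,
    membershipPattern]
  refine forall_congr' fun i => ?_
  cases x i <;> simp

theorem membershipPattern_preimage_eval (i : ι) :
    membershipPattern Z ⁻¹' {x | x i = true} = Z i := by
  ext a
  simp [membershipPattern]

theorem measurableSet_membershipPattern_preimage_singleton [MeasurableSpace α] [Countable ι]
    (hZ : ∀ i, MeasurableSet (Z i)) (x : ι → Bool) :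
    MeasurableSet (membershipPattern Z ⁻¹' {x}) := by
  rw [membershipPattern_preimage_singleton]
  refine MeasurableSet.iInter fun i => ?_
  cases x i
  exacts [(hZ i).compl, hZ i]

end MembershipPattern

theorem binary_coexistent_implies_jointly_measurable_general
    {H : Type*} [NormedAddCommGroup H] [InnerProductSpace ℂ H] [CompleteSpace H]
    {n : ℕ} (E : Fin n → (H →L[ℂ] H))
    (Ωm : Type*) [MeasurableSpace Ωm] (M : POVM Ωm H)
    (Z : Fin n → Set Ωm) (hZ : ∀ i, MeasurableSet (Z i))
    (hMZ : ∀ i, M.toFun (Z i) = E i) :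
    (∀ x : Fin n → Bool,
      (M.toFun (⋂ i, if x i then Z i else (Z i)ᶜ)).IsPositive) ∧
    (∑ x : Fin n → Bool, M.toFun (⋂ i, if x i then Z i else (Z i)ᶜ)) = 1 ∧
    (∀ i : Fin n,
      (∑ x ∈ Finset.univ.filter (fun x : Fin n → Bool => x i = true),
        M.toFun (⋂ i, if x i then Z i else (Z i)ᶜ)) = E i) := by
  have hfib := M.toFun_preimage_finset (measurableSet_membershipPattern_preimage_singleton Z hZ)
  simp only [membershipPattern_preimage_singleton] at hfib
  refine ⟨fun x => M.isPositive' _, ?_, fun i => ?_⟩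
  · rw [← hfib, Finset.coe_univ, Set.preimage_univ, M.total']
  · rw [← hfib, Finset.coe_filter_univ, membershipPattern_preimage_eval, hMZ]

/-- Let `E₁, …, Eₙ` be effects on `H`.  If the binary observables
`Oᴱⁱ = (Eᵢ, 1 - Eᵢ)` are coexistent, i.e. there is a POVM `M` and sets `Zᵢ` with
`Eᵢ = M(Zᵢ)`, then `N(x₁,…,xₙ) := M(Z₁^{x₁} ∩ ⋯ ∩ Zₙ^{xₙ})` (with `Z^{+1} = Z`,
`Z^{-1} = Zᶜ`) is a POVM on `{−1,+1}ⁿ` whose `i`-th marginal at `+1` is `Eᵢ` (so the `n`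
binary observables are jointly measurable). -/
theorem binary_coexistent_implies_jointly_measurable
    {H : Type*} [NormedAddCommGroup H] [InnerProductSpace ℂ H] [CompleteSpace H]
    {n : ℕ} (E : Fin n → (H →L[ℂ] H))
    (hE : ∀ i, (E i).IsPositive ∧ ((1 : H →L[ℂ] H) - E i).IsPositive)
    (Ωm : Type*) [MeasurableSpace Ωm] (M : POVM Ωm H)
    (Z : Fin n → Set Ωm) (hZ : ∀ i, MeasurableSet (Z i))
    (hMZ : ∀ i, M.toFun (Z i) = E i) :
    (∀ x : Fin n → Bool,
      (M.toFun (⋂ i, if x i then Z i else (Z i)ᶜ)).IsPositive) ∧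
    (∑ x : Fin n → Bool, M.toFun (⋂ i, if x i then Z i else (Z i)ᶜ)) = 1 ∧
    (∀ i : Fin n,
      (∑ x ∈ Finset.univ.filter (fun x : Fin n → Bool => x i = true),
        M.toFun (⋂ i, if x i then Z i else (Z i)ᶜ)) = E i) :=
  binary_coexistent_implies_jointly_measurable_general E Ωm M Z hZ hMZ
end

section
/- Let A be a POVM on a measurable space (Ω,Σ) with minimal Naimark dilation (K, P, J), i.e., A(X) = J* P(X) J with P a projection-valued measure on K, J : H → K an isometry, and span{P(X)Jφ} dense in K. Suppose A is extreme in the convex set of POVMs. Then for any POVM M on (Ω̄,Σ̄) and any X ∈ Σ, Z ∈ Σ̄ with M(Z) = A(X), and any set Z' ∈ Σ̄, the operator C with 0 ≤ C ≤ P(X) and M(Z' ∩ Z) = J* C P(X) J is such that in fact M(Z' ∩ Z) = J* P(X) C P(X) J. -/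
open scoped InnerProductSpace

variable {Ω Ω' Ωb : Type*} [MeasurableSpace Ω] [MeasurableSpace Ω'] [MeasurableSpace Ωb]
variable {H : Type*} [NormedAddCommGroup H] [InnerProductSpace ℂ H] [CompleteSpace H]

/-! In the C⋆-algebra `L(K)`, an operator `0 ≤ C ≤ P(X)` below a projection satisfies
`C P(X) = C = P(X) C`, hence `C P(X) = P(X) C P(X)`. -/

lemma POVM.IsSharp.isStarProjection {P : POVM Ω H} (hP : P.IsSharp) (s : Set Ω) :
    IsStarProjection (P.toFun s) :=
  ⟨hP s, (P.isPositive' s).isSelfAdjoint⟩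

theorem compression_formula_general
    {K : Type*} [NormedAddCommGroup K] [InnerProductSpace ℂ K] [CompleteSpace K]
    (P : POVM Ω K) (hP : P.IsSharp) (J : H →L[ℂ] K)
    (M : POVM Ωb H) (X : Set Ω)
    (Z Z' : Set Ωb)
    (C : K →L[ℂ] K) (hCpos : C.IsPositive) (hCle : (P.toFun X - C).IsPositive)
    (hC : M.toFun (Z' ∩ Z) = (ContinuousLinearMap.adjoint J) ∘L (C ∘L P.toFun X) ∘L J) :
    M.toFun (Z' ∩ Z) =
      (ContinuousLinearMap.adjoint J) ∘L (P.toFun X ∘L C ∘L P.toFun X) ∘L J := by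
  have hC₀ : 0 ≤ C := C.nonneg_iff_isPositive.mpr hCpos
  have hCP : C ≤ P.toFun X := (C.le_def _).mpr hCle
  obtain ⟨hCPX, hPXC⟩ :=
    (hP.isStarProjection X).mul_right_and_mul_left_of_nonneg_of_le hC₀ hCP
  rw [hC]
  congr 2
  change C * P.toFun X = P.toFun X * (C * P.toFun X)
  rw [hCPX, hPXC]

/-- Let `A` be a POVM on `(Ω,Σ)` with minimal Naimark dilation `(K, P, J)`,
and suppose `A` is extreme.  Then for any POVM `M` on `(Ω̄,Σ̄)`, any `X ∈ Σ`, `Z ∈ Σ̄` with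
`M(Z) = A(X)`, and any `Z' ∈ Σ̄`: if `C` satisfies `0 ≤ C ≤ P(X)` and
`M(Z' ∩ Z) = J* C P(X) J`, then in fact `M(Z' ∩ Z) = J* P(X) C P(X) J`. -/
theorem compression_formula
    {K : Type*} [NormedAddCommGroup K] [InnerProductSpace ℂ K] [CompleteSpace K]
    (A : POVM Ω H) (P : POVM Ω K) (hP : P.IsSharp) (J : H →L[ℂ] K)
    (hJ : ∀ x : H, ‖J x‖ = ‖x‖)
    (hdil : ∀ X, A.toFun X = (ContinuousLinearMap.adjoint J) ∘L P.toFun X ∘L J)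
    (hmin : Dense (Submodule.span ℂ {y : K | ∃ (X : Set Ω) (φ : H), y = P.toFun X (J φ)} : Set K))
    (hext : A.Extreme)
    (M : POVM Ωb H) (X : Set Ω) (hX : MeasurableSet X)
    (Z Z' : Set Ωb) (hZ : MeasurableSet Z) (hZ' : MeasurableSet Z')
    (hMZ : M.toFun Z = A.toFun X)
    (C : K →L[ℂ] K) (hCpos : C.IsPositive) (hCle : (P.toFun X - C).IsPositive)
    (hC : M.toFun (Z' ∩ Z) = (ContinuousLinearMap.adjoint J) ∘L (C ∘L P.toFun X) ∘L J) :
    M.toFun (Z' ∩ Z) =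
      (ContinuousLinearMap.adjoint J) ∘L (P.toFun X ∘L C ∘L P.toFun X) ∘L J :=
  compression_formula_general P hP J M X Z Z' C hCpos hCle hC
end

section
/- Any discrete extreme POVM A on (Ω,Σ) and any POVM M on (Ω̄,Σ̄) with ran A ⊆ ran M are jointly measurable: there exists a POVM N on the product σ-algebra Σ⊗Σ̄ with N(X×Ω̄) = A(X) for all X ∈ Σ and N(Ω×Z) = M(Z) for all Z ∈ Σ̄. -/
open scoped InnerProductSpace

variable {Ω Ω' Ωb : Type*} [MeasurableSpace Ω] [MeasurableSpace Ω'] [MeasurableSpace Ωb]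
variable {H : Type*} [NormedAddCommGroup H] [InnerProductSpace ℂ H] [CompleteSpace H]

/-!
A discrete POVM `A` can be cut into countably many atoms `aₙ = A (index⁻¹ {n})` by a measurable
`index : Ω → ℕ`, the atom `aₙ` sitting at a point `point n`, so that `A` is the image of the
observable `n ↦ aₙ` on `ℕ` under `point`. If an effect `G` lies below two different atoms `aⱼ`
and `aₖ`, moving `G` from `point j` to `point k`, or from `point k` to `point j`, gives two POVMs
whose average is `A`; extremality forces `G = 0`. So if `M (Zₙ) = aₙ`, the sets `Zₙ` overlap only
in `M`-null sets, and since `∑ aₙ = 1` they cover `Ω̄` up to an `M`-null set. They thus define a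
measurable `g : Ω̄ → ℕ` with `M (g⁻¹ {n}) = aₙ`, whence `A = M ∘ f⁻¹` for `f = point ∘ g`, and the
image of `M` under `w ↦ (f w, w)` is a joint observable of `A` and `M`.
-/

open Set MeasureTheory

section FirstIndex

variable {α : Type*} (Z : ℕ → Set α)

def completeCover (n : ℕ) : Set α := Z n ∪ (⋃ m, Z m)ᶜ

theorem exists_mem_completeCover (a : α) : ∃ n, a ∈ completeCover Z n := by
  by_cases ha : a ∈ ⋃ m, Z m
  · obtain ⟨n, hn⟩ := mem_iUnion.1 ha
    exact ⟨n, Or.inl hn⟩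
  · exact ⟨0, Or.inr ha⟩

open Classical in
/-- The least `n` with `a ∈ Z n`, and `0` for the points outside `⋃ n, Z n`. -/
noncomputable def firstIndex (a : α) : ℕ := Nat.find (exists_mem_completeCover Z a)

variable {Z}

open Classical in
theorem measurable_firstIndex [MeasurableSpace α] (hZ : ∀ n, MeasurableSet (Z n)) :
    Measurable (firstIndex Z) :=
  measurable_find _ fun n => (hZ n).union (MeasurableSet.iUnion hZ).compl

open Classical in
theorem preimage_firstIndex_singleton (n : ℕ) :
    firstIndex Z ⁻¹' {n} = disjointed (completeCover Z) n :=
  preimage_find_eq_disjointed _ _ n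

theorem firstIndex_le {a : α} {n : ℕ} (ha : a ∈ Z n) : firstIndex Z a ≤ n := by
  classical
  exact Nat.find_min' _ (Or.inl ha)

theorem mem_firstIndex {a : α} {n : ℕ} (ha : a ∈ Z n) : a ∈ Z (firstIndex Z a) := by
  classical
  exact (Nat.find_spec (exists_mem_completeCover Z a)).resolve_right
    (not_not_intro (mem_iUnion.2 ⟨n, ha⟩))

end FirstIndex

theorem exists_measurableSet_inseparable {ι : Type*} [Countable ι] (e : ι → Ω) :
    ∃ X : ι → Set Ω, ∀ n, MeasurableSet (X n) ∧ e n ∈ X n ∧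
      ∀ m, e m ∈ X n → ∀ s, MeasurableSet s → (e n ∈ s ↔ e m ∈ s) := by
  have hsep : ∀ n m, ∃ S, MeasurableSet S ∧ e n ∈ S ∧
      (e m ∈ S → ∀ s, MeasurableSet s → (e n ∈ s ↔ e m ∈ s)) := by
    intro n m
    by_cases h : ∀ s, MeasurableSet s → (e n ∈ s ↔ e m ∈ s)
    · exact ⟨univ, .univ, trivial, fun _ => h⟩
    simp only [not_forall] at h
    obtain ⟨s, hs, hiff⟩ := h
    by_cases hn : e n ∈ s
    · exact ⟨s, hs, hn, fun hm => absurd (iff_of_true hn hm) hiff⟩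
    · exact ⟨sᶜ, hs.compl, hn, fun hm => absurd (iff_of_false hn hm) hiff⟩
  choose S hS using hsep
  exact ⟨fun n => ⋂ m, S n m, fun n => ⟨.iInter fun m => (hS n m).1,
    mem_iInter.2 fun m => (hS n m).2.1, fun m hm => (hS n m).2.2 (mem_iInter.1 hm m)⟩⟩

namespace POVM

section Basic

variable (A : POVM Ω H)

def vectorMeasure (x : H) : VectorMeasure Ω H where
  measureOf' s := A.toFun s x
  empty' := by simp [A.empty']
  not_measurable' s hs := by simp [A.not_measurable' s hs]
  m_iUnion' _ hf hd := A.m_iUnion' _ hf hd x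

@[simp]
theorem vectorMeasure_apply (x : H) (s : Set Ω) : A.vectorMeasure x s = A.toFun s x := rfl

theorem toFun_nonneg (s : Set Ω) : 0 ≤ A.toFun s :=
  (ContinuousLinearMap.nonneg_iff_isPositive _).2 (A.isPositive' s)

variable {A} {S T : Set Ω}

theorem toFun_mono (hS : MeasurableSet S) (hT : MeasurableSet T) (hST : S ⊆ T) :
    A.toFun S ≤ A.toFun T := by
  have hsplit : A.toFun T = A.toFun S + A.toFun (T \ S) := by
    ext x
    exact ((A.vectorMeasure x).of_add_of_sdiff hS hT hST).symm
  rw [ContinuousLinearMap.le_def, hsplit, add_sub_cancel_left]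
  exact A.isPositive' _

theorem toFun_eq_zero_of_subset (hS : MeasurableSet S) (hT : MeasurableSet T) (hST : S ⊆ T)
    (hT0 : A.toFun T = 0) : A.toFun S = 0 :=
  le_antisymm (hT0 ▸ toFun_mono hS hT hST) (A.toFun_nonneg S)

theorem toFun_iUnion_eq_zero {ι : Sort*} [Countable ι] {N : ι → Set Ω}
    (hN : ∀ i, MeasurableSet (N i)) (h0 : ∀ i, A.toFun (N i) = 0) : A.toFun (⋃ i, N i) = 0 := by
  rcases isEmpty_or_nonempty ι with hι | hι
  · simp [A.empty']
  obtain ⟨f, hf⟩ := exists_surjective_nat ι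
  have hNf : ∀ n, MeasurableSet (N (f n)) := fun n => hN (f n)
  ext x
  rw [← hf.iUnion_comp, ← iUnion_disjointed, ← vectorMeasure_apply,
    VectorMeasure.of_disjoint_iUnion (MeasurableSet.disjointed hNf) (disjoint_disjointed _)]
  simp [toFun_eq_zero_of_subset (MeasurableSet.disjointed hNf _) (hNf _) (disjointed_subset _ _)
    (h0 _)]

theorem toFun_eq_of_sdiff_eq_zero (hS : MeasurableSet S) (hT : MeasurableSet T)
    (hST : A.toFun (S \ T) = 0) (hTS : A.toFun (T \ S) = 0) : A.toFun S = A.toFun T := by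
  ext x
  have := (A.vectorMeasure x).of_sdiff_of_sdiff_eq_zero hS hT (by simp [hTS])
  simpa [hST] using this.symm

theorem toFun_union_of_eq_zero (hS : MeasurableSet S) (hT : MeasurableSet T)
    (hT0 : A.toFun T = 0) : A.toFun (S ∪ T) = A.toFun S := by
  refine toFun_eq_of_sdiff_eq_zero (hS.union hT) hS ?_
    (by rw [sdiff_eq_empty.2 subset_union_left, A.empty'])
  exact toFun_eq_zero_of_subset ((hS.union hT).diff hS) hT (fun _ hw => hw.1.resolve_left hw.2)
    hT0

end Basic

def ofVectorMeasure (F : Set Ω → H →L[ℂ] H)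
    (hF : ∀ x, ∃ v : VectorMeasure Ω H, ∀ s, v s = F s x)
    (hpos : ∀ s, 0 ≤ F s) (huniv : F univ = 1) : POVM Ω H where
  toFun := F
  isPositive' s := (ContinuousLinearMap.nonneg_iff_isPositive _).1 (hpos s)
  empty' := by
    ext x
    obtain ⟨v, hv⟩ := hF x
    simp [← hv]
  total' := huniv
  not_measurable' s hs := by
    ext x
    obtain ⟨v, hv⟩ := hF x
    simp [← hv, v.not_measurable hs]
  m_iUnion' _ hf hd x := by
    obtain ⟨v, hv⟩ := hF x
    simpa only [hv] using v.m_iUnion hf hd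

open Classical in
noncomputable def map (A : POVM Ω H) {f : Ω → Ω'} (hf : Measurable f) : POVM Ω' H :=
  ofVectorMeasure (fun s => if MeasurableSet s then A.toFun (f ⁻¹' s) else 0)
    (fun x => ⟨(A.vectorMeasure x).map f, fun s => by
      by_cases hs : MeasurableSet s
      · simp [hs, VectorMeasure.map_apply _ hf]
      · simp [hs, VectorMeasure.not_measurable _ hs]⟩)
    (fun s => by split_ifs; exacts [A.toFun_nonneg _, le_rfl])
    (by simp [A.total'])

theorem map_toFun (A : POVM Ω H) {f : Ω → Ω'} (hf : Measurable f) {s : Set Ω'}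
    (hs : MeasurableSet s) : (A.map hf).toFun s = A.toFun (f ⁻¹' s) :=
  if_pos hs

section Countable

variable {ι : Type*} [Countable ι] [MeasurableSpace ι] [MeasurableSingletonClass ι]

theorem hasSum_toFun_singleton (P : POVM ι H) (s : Set ι) (x : H) :
    HasSum (fun i : s => P.toFun {i.1} x) (P.toFun s x) := by
  have := (P.vectorMeasure x).hasSum_of_disjoint_iUnion (f := fun i : s => {i.1})
    (fun _ => measurableSet_singleton _)
    (fun i j hij => disjoint_singleton.2 (Subtype.coe_injective.ne hij))
  rwa [iUnion_of_singleton_coe] at this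

theorem toFun_eq_of_forall_singleton {P Q : POVM ι H} (h : ∀ i, P.toFun {i} = Q.toFun {i}) :
    P.toFun = Q.toFun := by
  funext s
  ext x
  refine (P.hasSum_toFun_singleton s x).unique ?_
  simpa only [h] using Q.hasSum_toFun_singleton s x

theorem hasSum_toFun_preimage_singleton (A : POVM Ω H) {g : Ω → ι} (hg : Measurable g) (x : H) :
    HasSum (fun i => A.toFun (g ⁻¹' {i}) x) x := by
  have := (A.vectorMeasure x).hasSum_of_disjoint_iUnion
    (fun i => hg (measurableSet_singleton i)) fun i j hij => (disjoint_singleton.2 hij).preimage g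
  rwa [← preimage_iUnion, iUnion_of_singleton, preimage_univ, vectorMeasure_apply, A.total'] at this

theorem toFun_preimage_eq_of_singleton {A : POVM Ω H} {M : POVM Ωb H} {g : Ωb → ι} {h : Ω → ι}
    (hg : Measurable g) (hh : Measurable h)
    (hgh : ∀ i, M.toFun (g ⁻¹' {i}) = A.toFun (h ⁻¹' {i})) (E : Set ι) :
    M.toFun (g ⁻¹' E) = A.toFun (h ⁻¹' E) := by
  have hmap : (M.map hg).toFun = (A.map hh).toFun :=
    toFun_eq_of_forall_singleton fun i => by
      simp only [map_toFun _ _ (measurableSet_singleton i), hgh]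
  simpa only [map_toFun _ _ (Countable.measurableSet E.to_countable)] using congrFun hmap E

end Countable

section Disjointed

variable {M : POVM Ωb H} {Z : ℕ → Set Ωb}

theorem toFun_disjointed (hZ : ∀ n, MeasurableSet (Z n))
    (hdisj : Pairwise fun i j => M.toFun (Z i ∩ Z j) = 0) (n : ℕ) :
    M.toFun (disjointed Z n) = M.toFun (Z n) := by
  have hmeas : ∀ i, MeasurableSet (⋃ (_ : i < n), Z i ∩ Z n) :=
    fun i => .iUnion fun _ => (hZ i).inter (hZ n)
  have hnull : M.toFun (⋃ i, ⋃ (_ : i < n), Z i ∩ Z n) = 0 :=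
    toFun_iUnion_eq_zero hmeas fun i =>
      toFun_iUnion_eq_zero (fun _ => (hZ i).inter (hZ n)) fun hi => hdisj hi.ne
  refine toFun_eq_of_sdiff_eq_zero (MeasurableSet.disjointed hZ n) (hZ n)
    (by rw [sdiff_eq_empty.2 (disjointed_subset Z n), M.empty']) ?_
  refine toFun_eq_zero_of_subset ((hZ n).diff (MeasurableSet.disjointed hZ n))
    (.iUnion hmeas) (fun w hw => ?_) hnull
  simp only [disjointed_eq_inter_compl, mem_sdiff, mem_inter_iff, mem_iInter, mem_compl_iff,
    not_and, not_forall, not_not] at hw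
  obtain ⟨i, hi, hwi⟩ := hw.2 hw.1
  exact mem_iUnion₂.2 ⟨i, hi, hwi, hw.1⟩

theorem exists_measurable_toFun_preimage_singleton_eq (hZ : ∀ n, MeasurableSet (Z n))
    (hdisj : Pairwise fun i j => M.toFun (Z i ∩ Z j) = 0)
    (hsum : ∀ x, HasSum (fun n => M.toFun (Z n) x) x) :
    ∃ g : Ωb → ℕ, Measurable g ∧ ∀ n, M.toFun (g ⁻¹' {n}) = M.toFun (Z n) := by
  have hU : MeasurableSet (⋃ n, Z n) := .iUnion hZ
  have hR : M.toFun (⋃ n, Z n)ᶜ = 0 := by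
    ext x
    have hsumU := M.m_iUnion' _ (MeasurableSet.disjointed hZ) (disjoint_disjointed Z) x
    simp only [iUnion_disjointed, toFun_disjointed hZ hdisj] at hsumU
    rw [← vectorMeasure_apply, VectorMeasure.of_compl hU, vectorMeasure_apply, vectorMeasure_apply,
      M.total', hsumU.unique (hsum x)]
    simp
  have hW : ∀ n, MeasurableSet (completeCover Z n) := fun n => (hZ n).union hU.compl
  have hWZ : ∀ n, M.toFun (completeCover Z n) = M.toFun (Z n) :=
    fun n => toFun_union_of_eq_zero (hZ n) hU.compl hR
  have hWdisj : Pairwise fun i j => M.toFun (completeCover Z i ∩ completeCover Z j) = 0 := by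
    intro i j hij
    rw [completeCover, completeCover, ← inter_union_distrib_right,
      toFun_union_of_eq_zero ((hZ i).inter (hZ j)) hU.compl hR, hdisj hij]
  refine ⟨firstIndex Z, measurable_firstIndex hZ, fun n => ?_⟩
  rw [preimage_firstIndex_singleton, toFun_disjointed hW hWdisj, hWZ]

end Disjointed

open Classical in
noncomputable def transfer (A : POVM Ω H) (a b : Ω) (G : H →L[ℂ] H) (hG : 0 ≤ G)
    (hGA : ∀ s, MeasurableSet s → a ∈ s → b ∉ s → G ≤ A.toFun s) : POVM Ω H :=
  ofVectorMeasure (fun s => A.toFun s + (if MeasurableSet s ∧ b ∈ s then G else 0)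
      - (if MeasurableSet s ∧ a ∈ s then G else 0))
    (fun x => ⟨A.vectorMeasure x + VectorMeasure.dirac b (G x) - VectorMeasure.dirac a (G x),
      fun s => by
        have hdirac : ∀ p, VectorMeasure.dirac p (G x) s =
            (if MeasurableSet s ∧ p ∈ s then G else 0) x := fun p => by
          split_ifs with hp
          exacts [VectorMeasure.dirac_apply_of_mem hp.1 hp.2, by simp [VectorMeasure.dirac, hp]]
        simp only [sub_apply, add_apply, vectorMeasure_apply, hdirac]⟩)
    (fun s => by
      by_cases hs : MeasurableSet s
      · by_cases ha : a ∈ s <;> by_cases hb : b ∈ s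
        · simpa [hs, ha, hb] using A.toFun_nonneg s
        · simpa [hs, ha, hb] using hGA s hs ha hb
        · simpa [hs, ha, hb] using add_nonneg (A.toFun_nonneg s) hG
        · simpa [hs, ha, hb] using A.toFun_nonneg s
      · simp [hs, A.not_measurable' s hs])
    (by simp [A.total'])

open Classical in
theorem transfer_toFun (A : POVM Ω H) (a b : Ω) (G : H →L[ℂ] H) (hG : 0 ≤ G)
    (hGA : ∀ s, MeasurableSet s → a ∈ s → b ∉ s → G ≤ A.toFun s) (s : Set Ω) :
    (A.transfer a b G hG hGA).toFun s = A.toFun s + (if MeasurableSet s ∧ b ∈ s then G else 0)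
      - (if MeasurableSet s ∧ a ∈ s then G else 0) :=
  rfl

theorem Extreme.eq_zero_of_le {A : POVM Ω H} (hA : A.Extreme) {a b : Ω} {Y : Set Ω}
    (hY : MeasurableSet Y) (ha : a ∈ Y) (hb : b ∉ Y) {G : H →L[ℂ] H} (hG : 0 ≤ G)
    (hGa : ∀ s, MeasurableSet s → a ∈ s → b ∉ s → G ≤ A.toFun s)
    (hGb : ∀ s, MeasurableSet s → b ∈ s → a ∉ s → G ≤ A.toFun s) : G = 0 := by
  have hmid : ∀ s, A.toFun s = ((1 / 2 : ℝ) : ℂ) • (A.transfer a b G hG hGa).toFun s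
      + ((1 - 1 / 2 : ℝ) : ℂ) • (A.transfer b a G hG hGb).toFun s := by
    intro s
    rw [transfer_toFun, transfer_toFun]
    norm_num
    module
  have hval := congrFun (hA _ _ (1 / 2) (by norm_num) (by norm_num) hmid).1 Y
  simpa [transfer_toFun, hY, ha, hb] using hval

/-- `A X = ∑_{n : point n ∈ X} A (index⁻¹ {n})`: the `n`-th atom sits at `point n`, and an atom
whose index is not read back from its point carries no weight. -/
structure AtomicDecomposition (A : POVM Ω H) where
  point : ℕ → Ω
  index : Ω → ℕ
  measurable_index : Measurable index
  toFun_preimage_point : ∀ X, MeasurableSet X → A.toFun (index ⁻¹' (point ⁻¹' X)) = A.toFun X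
  index_point : ∀ n, index (point n) = n ∨ A.toFun (index ⁻¹' {n}) = 0

theorem AtomicDecomposition.toFun_atom_le {A : POVM Ω H} (D : A.AtomicDecomposition) {n : ℕ}
    {X : Set Ω} (hX : MeasurableSet X) (hn : D.point n ∈ X) :
    A.toFun (D.index ⁻¹' {n}) ≤ A.toFun X := by
  rw [← D.toFun_preimage_point X hX]
  exact toFun_mono (D.measurable_index (measurableSet_singleton n))
    (D.measurable_index (measurableSet_preimage measurable_from_nat hX))
    (preimage_mono (singleton_subset_iff.2 hn))

theorem Discrete.nonempty_atomicDecomposition [Nonempty Ω] {A : POVM Ω H} (hA : A.Discrete) :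
    Nonempty A.AtomicDecomposition := by
  obtain ⟨e, hconc⟩ : ∃ e : ℕ → Ω, ∀ s, MeasurableSet s → (∀ n, e n ∉ s) → A.toFun s = 0 := by
    obtain ⟨D, hD, hnull⟩ := hA
    obtain ⟨e, he⟩ := (hD.insert (Classical.arbitrary Ω)).exists_eq_range (insert_nonempty _ _)
    refine ⟨e, fun s hs hse => hnull s hs (eq_empty_of_forall_notMem fun ω hω => ?_)⟩
    obtain ⟨n, rfl⟩ : ω ∈ range e := he ▸ mem_insert_of_mem _ hω.2
    exact hse n hω.1
  obtain ⟨X, hX⟩ := exists_measurableSet_inseparable e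
  have hXm : ∀ n, MeasurableSet (X n) := fun n => (hX n).1
  have hindex : ∀ k, e k ∈ X (firstIndex X (e k)) := fun k => mem_firstIndex (hX k).2.1
  refine ⟨⟨e, firstIndex X, measurable_firstIndex hXm, fun S hS => ?_, fun n => ?_⟩⟩
  · have hS' : MeasurableSet (firstIndex X ⁻¹' (e ⁻¹' S)) :=
      measurable_firstIndex hXm (measurableSet_preimage measurable_from_nat hS)
    have hiff : ∀ k, e (firstIndex X (e k)) ∈ S ↔ e k ∈ S :=
      fun k => (hX _).2.2 k (hindex k) S hS
    refine toFun_eq_of_sdiff_eq_zero hS' hS (hconc _ (hS'.diff hS) fun k hk => ?_)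
      (hconc _ (hS.diff hS') fun k hk => ?_)
    exacts [hk.2 ((hiff k).1 hk.1), hk.2 ((hiff k).2 hk.1)]
  · refine or_iff_not_imp_left.2 fun hne => hconc _ (measurable_firstIndex hXm
      (measurableSet_singleton n)) fun k hk => ?_
    -- `e k` is inseparable from `e n`, so it lies in the earlier set `X (firstIndex X (e n))`
    have hlt : firstIndex X (e n) < n := (firstIndex_le (hX n).2.1).lt_of_ne hne
    have hk' : e k ∈ X n := hk ▸ hindex k
    have hle := firstIndex_le (((hX n).2.2 k hk' _ (hXm _)).1 (hindex n))
    rw [mem_preimage, mem_singleton_iff] at hk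
    omega

theorem Extreme.eq_zero_of_le_atom {A : POVM Ω H} (hA : A.Extreme) (D : A.AtomicDecomposition)
    {j k : ℕ} (hjk : j ≠ k) {G : H →L[ℂ] H} (hG : 0 ≤ G)
    (hGj : G ≤ A.toFun (D.index ⁻¹' {j})) (hGk : G ≤ A.toFun (D.index ⁻¹' {k})) : G = 0 := by
  rcases D.index_point j with hj | hj
  swap
  · exact le_antisymm (hj ▸ hGj) hG
  rcases D.index_point k with hk | hk
  swap
  · exact le_antisymm (hk ▸ hGk) hG
  refine hA.eq_zero_of_le (D.measurable_index (measurableSet_singleton j)) (by simp [hj])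
    (by simp [hk, hjk.symm]) hG (fun s hs ha _ => hGj.trans (D.toFun_atom_le hs ha))
    (fun s hs hb _ => hGk.trans (D.toFun_atom_le hs hb))

end POVM

theorem jointlyMeasurable_of_toFun_preimage_eq {A : POVM Ω H} {M : POVM Ωb H} {f : Ωb → Ω}
    (hf : Measurable f) (hfA : ∀ X, MeasurableSet X → M.toFun (f ⁻¹' X) = A.toFun X) :
    JointlyMeasurable A M := by
  refine ⟨M.map (hf.prodMk measurable_id), fun X hX => ?_, fun Y hY => ?_⟩
  · rw [POVM.map_toFun _ _ (hX.prod .univ), mk_preimage_prod, preimage_univ, inter_univ, hfA X hX]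
  · rw [POVM.map_toFun _ _ (MeasurableSet.univ.prod hY), mk_preimage_prod, preimage_univ,
      univ_inter, preimage_id]

theorem jointlyMeasurable_of_isEmpty [IsEmpty Ω] (A : POVM Ω H) (B : POVM Ω' H) :
    JointlyMeasurable A B := by
  have : Subsingleton (H →L[ℂ] H) :=
    subsingleton_of_zero_eq_one (by rw [← A.empty', ← A.total', univ_eq_empty_iff.2 ‹_›])
  exact ⟨A.map (Subsingleton.measurable (f := isEmptyElim)), fun _ _ => Subsingleton.elim _ _,
    fun _ _ => Subsingleton.elim _ _⟩

theorem discrete_extreme_ranSubset_jointlyMeasurable_general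
    (A : POVM Ω H) (hdisc : A.Discrete) (hext : A.Extreme)
    (M : POVM Ωb H) (hran : RanSubset A M) :
    JointlyMeasurable A M := by
  rcases isEmpty_or_nonempty Ω with hΩ | hΩ
  · exact jointlyMeasurable_of_isEmpty A M
  obtain ⟨D⟩ := hdisc.nonempty_atomicDecomposition
  choose Z hZ hMZ using fun n => hran _ (D.measurable_index (measurableSet_singleton n))
  have hdisj : Pairwise fun j k => M.toFun (Z j ∩ Z k) = 0 := fun j k hjk =>
    hext.eq_zero_of_le_atom D hjk (M.toFun_nonneg _)
      (hMZ j ▸ POVM.toFun_mono ((hZ j).inter (hZ k)) (hZ j) inter_subset_left)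
      (hMZ k ▸ POVM.toFun_mono ((hZ j).inter (hZ k)) (hZ k) inter_subset_right)
  obtain ⟨g, hg, hMg⟩ := POVM.exists_measurable_toFun_preimage_singleton_eq hZ hdisj
    fun x => by simpa only [hMZ] using A.hasSum_toFun_preimage_singleton D.measurable_index x
  refine jointlyMeasurable_of_toFun_preimage_eq ((measurable_from_nat (f := D.point)).comp hg)
    fun X hX => ?_
  rw [← D.toFun_preimage_point X hX, preimage_comp]
  exact POVM.toFun_preimage_eq_of_singleton hg D.measurable_index
    (fun n => (hMg n).trans (hMZ n)) _

/-- Any discrete extreme POVM `A` on `(Ω,Σ)` (on a separable complex Hilbert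
space) and any POVM `M` on `(Ω̄,Σ̄)` with `ran A ⊆ ran M` are jointly measurable. -/
theorem discrete_extreme_ranSubset_jointlyMeasurable
    [TopologicalSpace.SeparableSpace H] (A : POVM Ω H) (hdisc : A.Discrete) (hext : A.Extreme)
    (M : POVM Ωb H) (hran : RanSubset A M) :
    JointlyMeasurable A M :=
  discrete_extreme_ranSubset_jointlyMeasurable_general A hdisc hext M hran
end

section
/- Let M be an extreme POVM on (Ω̄,Σ̄) with minimal Naimark dilation (K,P,J), and let A be a POVM on (Ω,Σ) with ran A ⊆ ran M. Then the map Q : Σ → L(K) defined by Q(X) := P(Z_X), where Z_X satisfies A(X) = M(Z_X), is well-defined (independent of the choice of Z_X) and is a projection-valued measure with A(X) = J* Q(X) J for all X. -/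
open scoped InnerProductSpace

variable {Ω Ω' Ωb : Type*} [MeasurableSpace Ω] [MeasurableSpace Ω'] [MeasurableSpace Ωb]
variable {H : Type*} [NormedAddCommGroup H] [InnerProductSpace ℂ H] [CompleteSpace H]

/-!
Extremality of `M`, read through the dilation, says that a self-adjoint `D` commuting with every
`P(Z)` and with `J* D J = 0` vanishes: after normalising `‖D‖ = 1`, the operators
`J* P(Z) (1 ± D) J` form two POVMs with midpoint `M`, so `J* P(Z) D J = 0` for all `Z`, and by
minimality `D = 0`. Applied to `D = P(Z₁) - P(Z₂) - P(Z₃)` this shows that `P` is a function of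
`M` compatible with sums, so `Q(X) = P(Z_X)` is a finitely additive family of projections
commuting with `P` and compressing to `A`. For countable additivity, the projections `Q` of the
tails of a disjoint union tend to zero on `J H` because their compressions are the tails of `A`,
hence on `P(W) J H`, and, being uniformly bounded, everywhere by minimality.
-/

open scoped InnerProduct
open ContinuousLinearMap Filter Topology

section Additive
variable {β : Type*} [AddCommGroup β] {g : Set Ω → β}

lemma map_biUnion_finset_of_additive
    (hg : ∀ s t, MeasurableSet s → MeasurableSet t → Disjoint s t → g (s ∪ t) = g s + g t)
    {ι : Type*} {f : ι → Set Ω} (hm : ∀ n, MeasurableSet (f n))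
    (hd : Pairwise (Function.onFun Disjoint f)) (s : Finset ι) :
    g (⋃ n ∈ s, f n) = ∑ n ∈ s, g (f n) := by
  classical
  induction s using Finset.induction_on with
  | empty => simpa using hg ∅ ∅ .empty .empty disjoint_bot_left
  | insert b t hb ih =>
    rw [Finset.set_biUnion_insert, Finset.sum_insert hb, ← ih]
    refine hg _ _ (hm b) (t.measurableSet_biUnion fun n _ => hm n) ?_
    exact Set.disjoint_iUnion₂_right.mpr fun i hi => hd (ne_of_mem_of_not_mem hi hb).symm

lemma map_iUnion_sub_sum_of_additive
    (hg : ∀ s t, MeasurableSet s → MeasurableSet t → Disjoint s t → g (s ∪ t) = g s + g t)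
    {ι : Type*} [Countable ι] {f : ι → Set Ω} (hm : ∀ n, MeasurableSet (f n))
    (hd : Pairwise (Function.onFun Disjoint f)) (s : Finset ι) :
    g (⋃ n, f n) - ∑ n ∈ s, g (f n) = g ((⋃ n, f n) \ ⋃ n ∈ s, f n) := by
  have hs : MeasurableSet (⋃ n ∈ s, f n) := s.measurableSet_biUnion fun n _ => hm n
  rw [← map_biUnion_finset_of_additive hg hm hd s, sub_eq_iff_eq_add',
    ← hg _ _ hs ((MeasurableSet.iUnion hm).diff hs) Set.disjoint_sdiff_right,
    Set.union_sdiff_cancel (Set.iUnion₂_subset fun n _ => Set.subset_iUnion f n)]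

end Additive

namespace POVM

lemma toFun_union (A : POVM Ω H) {s t : Set Ω} (hs : MeasurableSet s) (ht : MeasurableSet t)
    (hst : Disjoint s t) : A.toFun (s ∪ t) = A.toFun s + A.toFun t := by
  set f : ℕ → Set Ω := fun n => if n = 0 then s else if n = 1 then t else ∅
  have hm : ∀ n, MeasurableSet (f n) := by
    intro n; simp only [f]; split_ifs <;> simp [hs, ht]
  have hd : Pairwise (Function.onFun Disjoint f) := by
    intro i j hij
    simp only [Function.onFun, f]
    split_ifs <;> simp_all [hst.symm]
  have hU : (⋃ n, f n) = s ∪ t := by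
    ext x; simp only [Set.mem_iUnion, Set.mem_union, f]
    constructor
    · rintro ⟨n, hn⟩; split_ifs at hn <;> simp_all
    · rintro (h | h)
      exacts [⟨0, by simpa⟩, ⟨1, by simpa⟩]
  ext x
  rw [add_apply, ← hU]
  refine (A.m_iUnion' f hm hd x).unique ?_
  convert (hasSum_ite_eq 0 (A.toFun s x)).add (hasSum_ite_eq 1 (A.toFun t x)) using 1
  funext n
  rcases n with _ | _ | n <;> simp [f, A.empty']

lemma toFun_eq_add_diff (A : POVM Ω H) {s t : Set Ω} (hs : MeasurableSet s)
    (ht : MeasurableSet t) (hst : s ⊆ t) : A.toFun t = A.toFun s + A.toFun (t \ s) := by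
  rw [← A.toFun_union hs (ht.diff hs) Set.disjoint_sdiff_right, Set.union_sdiff_cancel hst]

lemma toFun_mono_s13 (A : POVM Ω H) {s t : Set Ω} (hs : MeasurableSet s) (ht : MeasurableSet t)
    (hst : s ⊆ t) : A.toFun s ≤ A.toFun t := by
  rw [ContinuousLinearMap.le_def, A.toFun_eq_add_diff hs ht hst, add_sub_cancel_left]
  exact A.isPositive' _

lemma tendsto_toFun_iUnion_diff_biUnion (A : POVM Ω H) {f : ℕ → Set Ω}
    (hm : ∀ n, MeasurableSet (f n)) (hd : Pairwise (Function.onFun Disjoint f)) (x : H) :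
    Tendsto (fun s : Finset ℕ => A.toFun ((⋃ n, f n) \ ⋃ n ∈ s, f n) x) atTop (𝓝 0) := by
  have hsum : Tendsto (fun s : Finset ℕ => ∑ n ∈ s, A.toFun (f n) x) atTop
      (𝓝 (A.toFun (⋃ n, f n) x)) := A.m_iUnion' f hm hd x
  have h := (tendsto_const_nhds (x := A.toFun (⋃ n, f n) x)).sub hsum
  rw [sub_self] at h
  refine h.congr fun s => ?_
  rw [← sum_apply, ← sub_apply, map_iUnion_sub_sum_of_additive
    (fun s t hs ht hst => A.toFun_union hs ht hst) hm hd]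

namespace IsSharp
variable {P : POVM Ω H}

lemma isStarProjection_s13 (hP : P.IsSharp) (s : Set Ω) : IsStarProjection (P.toFun s) :=
  ⟨hP s, (P.isPositive' s).isSelfAdjoint⟩

lemma mul_eq_of_subset (hP : P.IsSharp) {s t : Set Ω} (hs : MeasurableSet s)
    (ht : MeasurableSet t) (hst : s ⊆ t) :
    P.toFun s * P.toFun t = P.toFun s ∧ P.toFun t * P.toFun s = P.toFun s := by
  have hle := P.toFun_mono_s13 hs ht hst
  exact ⟨((hP.isStarProjection_s13 s).le_iff_mul_eq_left (hP.isStarProjection_s13 t)).mp hle,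
    ((hP.isStarProjection_s13 s).le_iff_mul_eq_right (hP.isStarProjection_s13 t)).mp hle⟩

lemma mul_eq_zero_of_disjoint (hP : P.IsSharp) {s t : Set Ω} (hs : MeasurableSet s)
    (ht : MeasurableSet t) (hst : Disjoint s t) : P.toFun s * P.toFun t = 0 := by
  have h := (hP.mul_eq_of_subset ht (hs.union ht) Set.subset_union_right).2
  rwa [P.toFun_union hs ht hst, add_mul, (hP t).eq, add_eq_right] at h

lemma mul_eq_inter (hP : P.IsSharp) {s t : Set Ω} (hs : MeasurableSet s)
    (ht : MeasurableSet t) : P.toFun s * P.toFun t = P.toFun (s ∩ t) := by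
  rw [P.toFun_eq_add_diff (hs.inter ht) hs Set.inter_subset_left, add_mul,
    (hP.mul_eq_of_subset (hs.inter ht) ht Set.inter_subset_right).1,
    hP.mul_eq_zero_of_disjoint (hs.diff (hs.inter ht)) ht ?_, add_zero]
  rw [Set.sdiff_self_inter]
  exact Set.disjoint_sdiff_left

lemma exists_mul_eq (hP : P.IsSharp) (s t : Set Ω) : ∃ u, P.toFun s * P.toFun t = P.toFun u := by
  by_cases hs : MeasurableSet s
  · by_cases ht : MeasurableSet t
    · exact ⟨s ∩ t, hP.mul_eq_inter hs ht⟩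
    · exact ⟨∅, by rw [P.not_measurable' t ht, P.empty', mul_zero]⟩
  · exact ⟨∅, by rw [P.not_measurable' s hs, P.empty', zero_mul]⟩

lemma commute (hP : P.IsSharp) (s t : Set Ω) : Commute (P.toFun s) (P.toFun t) := by
  by_cases hs : MeasurableSet s
  · by_cases ht : MeasurableSet t
    · rw [Commute, SemiconjBy, hP.mul_eq_inter hs ht, hP.mul_eq_inter ht hs, Set.inter_comm]
    · rw [P.not_measurable' t ht]; exact Commute.zero_right _
  · rw [P.not_measurable' s hs]; exact Commute.zero_left _

end IsSharp
end POVM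

lemma ContinuousLinearMap.tendsto_apply_zero_of_dense_span {𝕜 E F ι : Type*}
    [NontriviallyNormedField 𝕜] [NormedAddCommGroup E] [NormedSpace 𝕜 E]
    [NormedAddCommGroup F] [NormedSpace 𝕜 F] {l : Filter ι} {T : ι → E →L[𝕜] F} {C : ℝ}
    (hT : ∀ i, ‖T i‖ ≤ C) {S : Set E} (hS : Dense (Submodule.span 𝕜 S : Set E))
    (h : ∀ y ∈ S, Tendsto (fun i => T i y) l (𝓝 0)) (x : E) :
    Tendsto (fun i => T i x) l (𝓝 0) := by
  let V : Submodule 𝕜 E :=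
    { carrier := {y | Tendsto (fun i => T i y) l (𝓝 0)}
      add_mem' := fun {a b} ha hb => by simpa using ha.add hb
      zero_mem' := by simpa using tendsto_const_nhds
      smul_mem' := fun c a ha => by simpa using ha.const_smul c }
  have hT' : Equicontinuous ((↑) ∘ T : ι → E → F) :=
    ((NormedSpace.equicontinuous_TFAE T).out 5 1).mp (⟨C, hT⟩ : ∃ C, ∀ i, ‖T i‖ ≤ C)
  have hV : IsClosed (V : Set E) := hT'.isClosed_setOfPred_tendsto (f := 0) continuous_const
  exact closure_minimal (Submodule.span_le.mpr fun y hy => h y hy) hV (hS x)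

section InnerProduct
variable {E F : Type*} [NormedAddCommGroup E] [InnerProductSpace ℂ E]
  [NormedAddCommGroup F] [InnerProductSpace ℂ F]

lemma IsStarProjection.norm_apply_eq_sqrt [CompleteSpace E] [CompleteSpace F] {p : E →L[ℂ] E}
    (hp : IsStarProjection p) (J : F →L[ℂ] E) (φ : F) :
    ‖p (J φ)‖ = √(RCLike.re ⟪φ, (J† ∘L p ∘L J) φ⟫_ℂ) := by
  have h := apply_norm_eq_sqrt_inner_adjoint_right (p ∘L J) φ
  rwa [adjoint_comp, ← star_eq_adjoint, hp.isSelfAdjoint.star_eq, comp_assoc,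
    ← comp_assoc p p J, ← mul_def, hp.isIdempotentElem.eq] at h

lemma ContinuousLinearMap.eq_zero_of_inner_eq_zero_of_dense_span {T : E →L[ℂ] E} {S : Set E}
    (hS : Dense (Submodule.span ℂ S : Set E)) (h : ∀ y ∈ S, ∀ z ∈ S, ⟪y, T z⟫_ℂ = 0) :
    T = 0 := by
  refine ext_on hS fun z hz => ?_
  have hTz : innerSL ℂ (T z) = 0 :=
    ext_on hS fun y hy => by simpa [inner_eq_zero_symm] using h y hy z hz
  simpa using congr($hTz (T z))

end InnerProduct

lemma IsSelfAdjoint.one_add_nonneg_of_norm_le_one {A : Type*} [CStarAlgebra A] [PartialOrder A]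
    [StarOrderedRing A] {a : A} (ha : IsSelfAdjoint a) (h : ‖a‖ ≤ 1) : 0 ≤ 1 + a := by
  have h1 : algebraMap ℝ A ‖a‖ ≤ 1 := by simpa using algebraMap_mono A h
  exact neg_le_iff_add_nonneg'.mp ((neg_le_neg h1).trans ha.neg_algebraMap_norm_le_self)

section Compression
variable {K : Type*} [NormedAddCommGroup K] [InnerProductSpace ℂ K] [CompleteSpace K]

theorem hasSum_of_compression {ι : Type*} {R : ι → K →L[ℂ] K} {J : H →L[ℂ] K}
    (hR : Dense (Submodule.span ℂ {y : K | ∃ (i : ι) (φ : H), y = R i (J φ)} : Set K))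
    (A : POVM Ω H) {Q : Set Ω → K →L[ℂ] K} (hQ : ∀ X, IsStarProjection (Q X))
    (hQR : ∀ X i, Commute (Q X) (R i))
    (hadd : ∀ X Y, MeasurableSet X → MeasurableSet Y → Disjoint X Y → Q (X ∪ Y) = Q X + Q Y)
    (hA : ∀ X, J† ∘L Q X ∘L J = A.toFun X) {f : ℕ → Set Ω} (hm : ∀ n, MeasurableSet (f n))
    (hd : Pairwise (Function.onFun Disjoint f)) (x : K) :
    HasSum (fun n => Q (f n) x) (Q (⋃ n, f n) x) := by
  let T : Finset ℕ → K →L[ℂ] K := fun s => Q ((⋃ n, f n) \ ⋃ n ∈ s, f n)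
  have hTJ : ∀ φ, Tendsto (fun s => T s (J φ)) atTop (𝓝 0) := fun φ => by
    have hcont : Continuous fun v : H => √(RCLike.re ⟪φ, v⟫_ℂ) := by fun_prop
    have h := (hcont.tendsto 0).comp (A.tendsto_toFun_iUnion_diff_biUnion hm hd φ)
    simp only [inner_zero_right, map_zero, Real.sqrt_zero] at h
    refine tendsto_zero_iff_norm_tendsto_zero.mpr (h.congr fun s => ?_)
    rw [Function.comp_apply, (hQ _).norm_apply_eq_sqrt, hA]
  have hT : ∀ y, Tendsto (fun s => T s y) atTop (𝓝 0) := by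
    refine tendsto_apply_zero_of_dense_span (C := 1) (fun s => IsStarProjection.norm_le _ (hQ _))
      hR ?_
    rintro _ ⟨i, φ, rfl⟩
    have h := ((R i).continuous.tendsto 0).comp (hTJ φ)
    rw [map_zero] at h
    exact h.congr fun s => DFunLike.congr_fun (hQR _ i).eq.symm (J φ)
  have h := (tendsto_const_nhds (x := Q (⋃ n, f n) x)).sub (hT x)
  rw [sub_zero] at h
  refine h.congr fun s => ?_
  rw [← sub_apply]
  change (_ - Q ((⋃ n, f n) \ ⋃ n ∈ s, f n)) x = _
  rw [← map_iUnion_sub_sum_of_additive hadd hm hd s, sub_sub_cancel, sum_apply]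

end Compression

section Dilation
variable {K : Type*} [NormedAddCommGroup K] [InnerProductSpace ℂ K] [CompleteSpace K]
  {M : POVM Ωb H} {P : POVM Ωb K} {J : H →L[ℂ] K}

lemma adjoint_comp_self_eq_one_of_dilation (hdil : ∀ Z, M.toFun Z = J† ∘L P.toFun Z ∘L J) :
    J† ∘L J = 1 := by
  simpa [M.total', P.total', one_def] using (hdil Set.univ).symm

lemma POVM.IsSharp.exists_compression (hP : P.IsSharp) {B : K →L[ℂ] K} (hB : 0 ≤ B)
    (hcomm : ∀ W, Commute (P.toFun W) B) (hJBJ : J† ∘L B ∘L J = 1) :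
    ∃ N : POVM Ωb H, ∀ W, N.toFun W = J† ∘L P.toFun W ∘L B ∘L J := by
  have hpos : ∀ W, (J† ∘L P.toFun W ∘L B ∘L J).IsPositive := fun W => by
    have hPB : P.toFun W ∘L B = (P.toFun W)† ∘L B ∘L P.toFun W := by
      rw [← star_eq_adjoint, (hP.isStarProjection_s13 W).isSelfAdjoint.star_eq, ← mul_def,
        ← mul_def, ← mul_def, ← (hcomm W).eq, ← mul_assoc, (hP W).eq]
    convert ((nonneg_iff_isPositive B).mp hB).adjoint_conj (P.toFun W ∘L J) using 1
    rw [adjoint_comp, ← comp_assoc (P.toFun W), hPB]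
    simp only [comp_assoc]
  refine ⟨⟨fun W => J† ∘L P.toFun W ∘L B ∘L J, hpos, ?_, ?_, ?_, ?_⟩, fun W => rfl⟩
  · simp [P.empty']
  · simpa [P.total', one_def] using hJBJ
  · intro s hs
    simp [P.not_measurable' s hs]
  · intro f hm hd x
    exact (P.m_iUnion' f hm hd (B (J x))).mapL (J†)

namespace POVM.Extreme

lemma compression_eq_zero (hext : M.Extreme) (hP : P.IsSharp)
    (hdil : ∀ Z, M.toFun Z = J† ∘L P.toFun Z ∘L J) {E : K →L[ℂ] K} (hE : IsSelfAdjoint E)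
    (hE1 : ‖E‖ ≤ 1) (hcomm : ∀ W, Commute (P.toFun W) E) (hJEJ : J† ∘L E ∘L J = 0)
    (W : Set Ωb) : J† ∘L P.toFun W ∘L E ∘L J = 0 := by
  have hJJ := adjoint_comp_self_eq_one_of_dilation hdil
  have hperturb : ∀ E' : K →L[ℂ] K, IsSelfAdjoint E' → ‖E'‖ ≤ 1 →
      (∀ W, Commute (P.toFun W) E') → J† ∘L E' ∘L J = 0 →
      ∃ N : POVM Ωb H, ∀ W, N.toFun W = J† ∘L P.toFun W ∘L (1 + E') ∘L J :=
    fun E' hE' hE'1 hcomm' hJE'J =>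
      hP.exists_compression (hE'.one_add_nonneg_of_norm_le_one hE'1)
        (fun W => (Commute.one_right _).add_right (hcomm' W))
        (by rw [add_comp, comp_add, one_def, id_comp, hJJ, hJE'J, add_zero])
  obtain ⟨N₁, hN₁⟩ := hperturb E hE hE1 hcomm hJEJ
  obtain ⟨N₂, hN₂⟩ := hperturb (-E) hE.neg (by rwa [norm_neg])
    (fun W => (hcomm W).neg_right) (by rw [neg_comp, comp_neg, hJEJ, neg_zero])
  have hmid : ∀ W,
      M.toFun W = ((1 / 2 : ℝ) : ℂ) • N₁.toFun W + ((1 - 1 / 2 : ℝ) : ℂ) • N₂.toFun W := by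
    intro W
    ext x
    simp only [hN₁, hN₂, hdil, comp_apply, add_apply, smul_apply, neg_apply, map_add, map_neg]
    norm_num
    module
  have h := congrFun (hext N₁ N₂ (1 / 2) (by norm_num) (by norm_num) hmid).1 W
  rwa [hN₁, hdil, add_comp, one_def, id_comp, comp_add, comp_add, add_eq_left] at h

theorem eq_zero_of_compression_eq_zero (hext : M.Extreme) (hP : P.IsSharp)
    (hdil : ∀ Z, M.toFun Z = J† ∘L P.toFun Z ∘L J)
    (hmin : Dense (Submodule.span ℂ
      {y : K | ∃ (Z : Set Ωb) (φ : H), y = P.toFun Z (J φ)} : Set K))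
    {D : K →L[ℂ] K} (hD : IsSelfAdjoint D) (hcomm : ∀ W, Commute (P.toFun W) D)
    (hJDJ : J† ∘L D ∘L J = 0) : D = 0 := by
  have hPD : ∀ W, J† ∘L P.toFun W ∘L D ∘L J = 0 := by
    rcases eq_or_ne D 0 with rfl | hD0
    · simp
    intro W
    have hc : IsSelfAdjoint (‖D‖⁻¹ : ℂ) := by
      rw [IsSelfAdjoint, star_inv₀, Complex.star_def, Complex.conj_ofReal]
    have h := hext.compression_eq_zero hP hdil (E := (‖D‖⁻¹ : ℂ) • D)
      (hc.smul hD) (norm_smul_inv_norm hD0).le (fun W => (hcomm W).smul_right _)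
      (by rw [smul_comp, comp_smul, hJDJ, smul_zero]) W
    rw [smul_comp, comp_smul, comp_smul, smul_eq_zero] at h
    exact h.resolve_left (by simpa using hD0)
  refine eq_zero_of_inner_eq_zero_of_dense_span hmin ?_
  rintro _ ⟨W₁, φ, rfl⟩ _ ⟨W₂, ψ, rfl⟩
  obtain ⟨W, hW⟩ := hP.exists_mul_eq W₁ W₂
  have hDP : D (P.toFun W₂ (J ψ)) = P.toFun W₂ (D (J ψ)) :=
    DFunLike.congr_fun (hcomm W₂).eq.symm (J ψ)
  calc ⟪P.toFun W₁ (J φ), D (P.toFun W₂ (J ψ))⟫_ℂ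
      = ⟪J φ, (P.toFun W₁ * P.toFun W₂) (D (J ψ))⟫_ℂ := by
        rw [← adjoint_inner_right, (P.isPositive' W₁).isSelfAdjoint.adjoint_eq, hDP]; rfl
    _ = ⟪φ, (J† ∘L P.toFun W ∘L D ∘L J) ψ⟫_ℂ := by
        rw [hW, ← adjoint_inner_right]; rfl
    _ = 0 := by rw [hPD, zero_apply, inner_zero_right]

theorem toFun_eq_add_of_toFun_eq_add (hext : M.Extreme) (hP : P.IsSharp)
    (hdil : ∀ Z, M.toFun Z = J† ∘L P.toFun Z ∘L J)
    (hmin : Dense (Submodule.span ℂ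
      {y : K | ∃ (Z : Set Ωb) (φ : H), y = P.toFun Z (J φ)} : Set K))
    {Z₁ Z₂ Z₃ : Set Ωb} (h : M.toFun Z₁ = M.toFun Z₂ + M.toFun Z₃) :
    P.toFun Z₁ = P.toFun Z₂ + P.toFun Z₃ := by
  refine sub_eq_zero.mp (hext.eq_zero_of_compression_eq_zero hP hdil hmin ?_ ?_ ?_)
  · exact (P.isPositive' Z₁).isSelfAdjoint.sub
      ((P.isPositive' Z₂).isSelfAdjoint.add (P.isPositive' Z₃).isSelfAdjoint)
  · exact fun W => (hP.commute W Z₁).sub_right ((hP.commute W Z₂).add_right (hP.commute W Z₃))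
  · rw [sub_comp, add_comp, comp_sub, comp_add, ← hdil, ← hdil, ← hdil, h, sub_self]

theorem toFun_eq_of_toFun_eq (hext : M.Extreme) (hP : P.IsSharp)
    (hdil : ∀ Z, M.toFun Z = J† ∘L P.toFun Z ∘L J)
    (hmin : Dense (Submodule.span ℂ
      {y : K | ∃ (Z : Set Ωb) (φ : H), y = P.toFun Z (J φ)} : Set K))
    {Z Z' : Set Ωb} (h : M.toFun Z = M.toFun Z') : P.toFun Z = P.toFun Z' := by
  simpa [P.empty'] using hext.toFun_eq_add_of_toFun_eq_add hP hdil hmin (Z₃ := ∅)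
    (by rw [M.empty', add_zero, h])

end POVM.Extreme

def inducedPVM (hext : M.Extreme) (hP : P.IsSharp)
    (hdil : ∀ Z, M.toFun Z = J† ∘L P.toFun Z ∘L J)
    (hmin : Dense (Submodule.span ℂ
      {y : K | ∃ (Z : Set Ωb) (φ : H), y = P.toFun Z (J φ)} : Set K))
    (A : POVM Ω H) (Z : Set Ω → Set Ωb) (hZ : ∀ X, M.toFun (Z X) = A.toFun X) : POVM Ω K where
  toFun X := P.toFun (Z X)
  isPositive' X := P.isPositive' (Z X)
  empty' := by
    rw [hext.toFun_eq_of_toFun_eq hP hdil hmin (Z' := ∅) (by rw [hZ, A.empty', M.empty']),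
      P.empty']
  total' := by
    rw [hext.toFun_eq_of_toFun_eq hP hdil hmin (Z' := Set.univ)
      (by rw [hZ, A.total', M.total']), P.total']
  not_measurable' X hX := by
    rw [hext.toFun_eq_of_toFun_eq hP hdil hmin (Z' := ∅)
      (by rw [hZ, A.not_measurable' X hX, M.empty']), P.empty']
  m_iUnion' _ hm hd :=
    hasSum_of_compression hmin A (fun X => hP.isStarProjection_s13 (Z X))
      (fun X W => hP.commute (Z X) W)
      (fun X Y hX hY hXY => hext.toFun_eq_add_of_toFun_eq_add hP hdil hmin
        (by rw [hZ, hZ, hZ, A.toFun_union hX hY hXY]))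
      (fun X => by rw [← hdil, hZ]) hm hd

end Dilation

lemma RanSubset.exists_toFun_eq {A : POVM Ω H} {M : POVM Ωb H} (hran : RanSubset A M)
    (X : Set Ω) : ∃ Z, MeasurableSet Z ∧ M.toFun Z = A.toFun X := by
  by_cases hX : MeasurableSet X
  · exact hran X hX
  · exact ⟨∅, .empty, by rw [M.empty', A.not_measurable' X hX]⟩

theorem extreme_mother_induced_pvm_general
    {K : Type*} [NormedAddCommGroup K] [InnerProductSpace ℂ K] [CompleteSpace K]
    (M : POVM Ωb H) (hext : M.Extreme)
    (P : POVM Ωb K) (hP : P.IsSharp) (J : H →L[ℂ] K)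
    (hdil : ∀ Z, M.toFun Z = (ContinuousLinearMap.adjoint J) ∘L P.toFun Z ∘L J)
    (hmin : Dense (Submodule.span ℂ
      {y : K | ∃ (Z : Set Ωb) (φ : H), y = P.toFun Z (J φ)} : Set K))
    (A : POVM Ω H) (hran : RanSubset A M) :
    (∀ Z Z', MeasurableSet Z → MeasurableSet Z' → M.toFun Z = M.toFun Z' →
      P.toFun Z = P.toFun Z') ∧
    ∃ Q : POVM Ω K, Q.IsSharp ∧
      (∀ X, MeasurableSet X →
        ∃ Z, MeasurableSet Z ∧ A.toFun X = M.toFun Z ∧ Q.toFun X = P.toFun Z) ∧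
      (∀ X, A.toFun X = (ContinuousLinearMap.adjoint J) ∘L Q.toFun X ∘L J) := by
  choose Z hZm hZ using hran.exists_toFun_eq
  refine ⟨fun _ _ _ _ => hext.toFun_eq_of_toFun_eq hP hdil hmin,
    inducedPVM hext hP hdil hmin A Z hZ, fun X => hP (Z X),
    fun X _ => ⟨Z X, hZm X, (hZ X).symm, rfl⟩, fun X => ?_⟩
  rw [← hZ X, hdil]
  rfl

/-- Let `M` be an extreme POVM on `(Ω̄,Σ̄)` with minimal Naimark dilation
`(K,P,J)`, and `A` a POVM on `(Ω,Σ)` with `ran A ⊆ ran M`.  Then `Q(X) := P(Z_X)` (where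
`A(X) = M(Z_X)`) is well defined — `M(Z) = M(Z')` implies `P(Z) = P(Z')` — and defines a
projection-valued measure `Q` with `A(X) = J* Q(X) J` for all `X`. -/
theorem extreme_mother_induced_pvm
    {K : Type*} [NormedAddCommGroup K] [InnerProductSpace ℂ K] [CompleteSpace K]
    (M : POVM Ωb H) (hext : M.Extreme)
    (P : POVM Ωb K) (hP : P.IsSharp) (J : H →L[ℂ] K)
    (hJ : ∀ x : H, ‖J x‖ = ‖x‖)
    (hdil : ∀ Z, M.toFun Z = (ContinuousLinearMap.adjoint J) ∘L P.toFun Z ∘L J)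
    (hmin : Dense (Submodule.span ℂ
      {y : K | ∃ (Z : Set Ωb) (φ : H), y = P.toFun Z (J φ)} : Set K))
    (A : POVM Ω H) (hran : RanSubset A M) :
    (∀ Z Z', MeasurableSet Z → MeasurableSet Z' → M.toFun Z = M.toFun Z' →
      P.toFun Z = P.toFun Z') ∧
    ∃ Q : POVM Ω K, Q.IsSharp ∧
      (∀ X, MeasurableSet X →
        ∃ Z, MeasurableSet Z ∧ A.toFun X = M.toFun Z ∧ Q.toFun X = P.toFun Z) ∧
      (∀ X, A.toFun X = (ContinuousLinearMap.adjoint J) ∘L Q.toFun X ∘L J) :=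
  extreme_mother_induced_pvm_general M hext P hP J hdil hmin A hran
end
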